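/- arXiv:1405.1214 — 6 statements merged into one kernel-verified Lean document; each statement's English description precedes it below -/
import Mathlib

section
/- Law of large numbers for random time changes of cumulative processes: assume E(|w_1|) < ∞ and E(τ_1) < ∞. Then almost surely lim_{t→∞} Z_t / t = E(w_1) / E(τ_1). -/
open MeasureTheory ProbabilityTheory Filter

/-- **Law of large numbers for random time changes of cumulative processes.**
Let `((w i, τ i))_{i≥1}` be i.i.d. with values in `ℝ × (0,∞)`, `W m` and `T m` the partial
sums, and `ν t = max {m : T m ≤ t}`. If `E|w 1| < ∞` and `E(τ 1) < ∞`, then almost surely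
`Z t / t = W (ν t) / t → E(w 1) / E(τ 1)` as `t → ∞`. -/
theorem stmt0
    {Ω : Type*} [MeasurableSpace Ω] (μ : Measure Ω) [IsProbabilityMeasure μ]
    (w τ : ℕ → Ω → ℝ)
    (hmeas : ∀ i, Measurable (fun ω => (w i ω, τ i ω)))
    (hindep : iIndepFun (fun i ω => (w i ω, τ i ω)) μ)
    (hident : ∀ i, IdentDistrib (fun ω => (w i ω, τ i ω)) (fun ω => (w 1 ω, τ 1 ω)) μ μ)
    (hτpos : ∀ i, ∀ᵐ ω ∂μ, 0 < τ i ω)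
    (hw : Integrable (w 1) μ) (hτ : Integrable (τ 1) μ)
    (W T : ℕ → Ω → ℝ)
    (hW : ∀ m ω, W m ω = ∑ i ∈ Finset.Icc 1 m, w i ω)
    (hT : ∀ m ω, T m ω = ∑ i ∈ Finset.Icc 1 m, τ i ω)
    (ν : ℝ → Ω → ℕ)
    (hν : ∀ᵐ ω ∂μ, ∀ t : ℝ, 0 ≤ t → T (ν t ω) ω ≤ t ∧ t < T (ν t ω + 1) ω)
    (Z : ℝ → Ω → ℝ) (hZ : ∀ t ω, Z t ω = W (ν t ω) ω) :
    ∀ᵐ ω ∂μ, Tendsto (fun t : ℝ => Z t ω / t) atTop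
      (nhds ((∫ ω', w 1 ω' ∂μ) / (∫ ω', τ 1 ω' ∂μ))) := by
  set Ew := ∫ ω', w 1 ω' ∂μ with hEw
  set Eτ := ∫ ω', τ 1 ω' ∂μ with hEτ
  -- marginal independence
  have hindw : iIndepFun w μ := by
    have := hindep.comp (fun _ => Prod.fst) (fun _ => measurable_fst)
    exact this
  have hindτ : iIndepFun τ μ := by
    have := hindep.comp (fun _ => Prod.snd) (fun _ => measurable_snd)
    exact this
  -- SLLN for w shifted
  have hSLLNw : ∀ᵐ ω ∂μ,
      Tendsto (fun n : ℕ => (∑ i ∈ Finset.range n, w (i + 1) ω) / n) atTop (nhds Ew) := by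
    have := strong_law_ae_real (μ := μ) (fun i => w (i + 1))
      (by simpa using hw)
      (fun i j hij => hindw.indepFun (by omega))
      (fun i => by simpa [Function.comp_def] using (hident (i + 1)).comp (measurable_fst))
    simpa using this
  have hSLLNτ : ∀ᵐ ω ∂μ,
      Tendsto (fun n : ℕ => (∑ i ∈ Finset.range n, τ (i + 1) ω) / n) atTop (nhds Eτ) := by
    have := strong_law_ae_real (μ := μ) (fun i => τ (i + 1))
      (by simpa using hτ)
      (fun i j hij => hindτ.indepFun (by omega))
      (fun i => by simpa [Function.comp_def] using (hident (i + 1)).comp (measurable_snd))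
    simpa using this
  -- positivity of Eτ
  have hτpos_ae : ∀ᵐ ω ∂μ, ∀ i, 0 < τ i ω := ae_all_iff.2 hτpos
  have hEτpos : 0 < Eτ := by
    rw [hEτ]
    have hnn : 0 ≤ᵐ[μ] τ 1 := by
      filter_upwards [hτpos 1] with ω hω using le_of_lt hω
    rw [integral_pos_iff_support_of_nonneg_ae hnn hτ, pos_iff_ne_zero]
    intro h0
    have hs : ∀ᵐ ω ∂μ, ω ∈ Function.support (τ 1) := by
      filter_upwards [hτpos 1] with ω hω using ne_of_gt hω
    have hns : ∀ᵐ ω ∂μ, ω ∉ Function.support (τ 1) :=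
      measure_eq_zero_iff_ae_notMem.mp h0
    obtain ⟨ω, h1, h2⟩ := (hs.and hns).exists
    exact h2 h1
  -- pointwise argument
  filter_upwards [hSLLNw, hSLLNτ, hτpos_ae, hν] with ω hWlim0 hTlim0 hpos hνω
  -- rewrite sums
  have hWeq : ∀ n, W n ω = ∑ i ∈ Finset.range n, w (i + 1) ω := by
    intro n
    rw [hW, ← Finset.Ico_add_one_right_eq_Icc, Finset.sum_Ico_eq_sum_range]
    simp [add_comm]
  have hTeq : ∀ n, T n ω = ∑ i ∈ Finset.range n, τ (i + 1) ω := by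
    intro n
    rw [hT, ← Finset.Ico_add_one_right_eq_Icc, Finset.sum_Ico_eq_sum_range]
    simp [add_comm]
  have hWlim : Tendsto (fun n : ℕ => W n ω / n) atTop (nhds Ew) := by
    simpa [hWeq] using hWlim0
  have hTlim : Tendsto (fun n : ℕ => T n ω / n) atTop (nhds Eτ) := by
    simpa [hTeq] using hTlim0
  -- T is strictly monotone in n
  have hTmono : StrictMono (fun n => T n ω) := by
    apply strictMono_nat_of_lt_succ
    intro n
    have : T (n + 1) ω = T n ω + τ (n + 1) ω := by
      rw [hTeq, hTeq, Finset.sum_range_succ]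
    rw [this]
    linarith [hpos (n + 1)]
  -- ν tends to infinity
  have hnu : Tendsto (fun t : ℝ => ν t ω) atTop atTop := by
    rw [tendsto_atTop]
    intro m
    filter_upwards [eventually_ge_atTop (max (T m ω) 0)] with t ht
    have ht0 : (0:ℝ) ≤ t := le_trans (le_max_right _ _) ht
    have hTm : T m ω ≤ t := le_trans (le_max_left _ _) ht
    have h2 := (hνω t ht0).2
    by_contra hcon
    push_neg at hcon
    have : ν t ω + 1 ≤ m := hcon
    have := hTmono.monotone this
    linarith
  have hνcast : Tendsto (fun t : ℝ => (ν t ω : ℝ)) atTop atTop :=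
    tendsto_natCast_atTop_atTop.comp hnu
  -- eventually ν t ≥ 1 and t > 0
  have hev : ∀ᶠ t : ℝ in atTop, 1 ≤ ν t ω ∧ 0 < t := by
    filter_upwards [hnu.eventually_ge_atTop 1, eventually_gt_atTop 0] with t h1 h2
    exact ⟨h1, h2⟩
  -- limits along ν
  have hWν : Tendsto (fun t : ℝ => W (ν t ω) ω / (ν t ω : ℝ)) atTop (nhds Ew) :=
    hWlim.comp hnu
  have hTν : Tendsto (fun t : ℝ => T (ν t ω) ω / (ν t ω : ℝ)) atTop (nhds Eτ) :=
    hTlim.comp hnu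
  have hTν1 : Tendsto (fun t : ℝ => T (ν t ω + 1) ω / ((ν t ω : ℝ) + 1)) atTop (nhds Eτ) := by
    have h1 : Tendsto (fun t : ℝ => ν t ω + 1) atTop atTop :=
      (tendsto_add_atTop_nat 1).comp hnu
    have h2 := hTlim.comp h1
    refine h2.congr fun t => ?_
    simp only [Function.comp_apply]
    push_cast
    ring
  -- ratio (ν t + 1)/ ν t → 1
  have hrat1 : Tendsto (fun t : ℝ => ((ν t ω : ℝ) + 1) / (ν t ω : ℝ)) atTop (nhds 1) := by
    have h := hνcast.inv_tendsto_atTop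
    have : Tendsto (fun t : ℝ => 1 + ((ν t ω : ℝ))⁻¹) atTop (nhds (1 + 0)) :=
      tendsto_const_nhds.add h
    rw [add_zero] at this
    apply this.congr'
    filter_upwards [hev] with t ⟨h1, _⟩
    have hne : (ν t ω : ℝ) ≠ 0 := by positivity
    field_simp
  -- upper bound : T(ν+1)/ν → Eτ
  have hupper : Tendsto (fun t : ℝ => T (ν t ω + 1) ω / (ν t ω : ℝ)) atTop (nhds Eτ) := by
    have := hTν1.mul hrat1
    rw [mul_one] at this
    apply this.congr'
    filter_upwards [hev] with t ⟨h1, _⟩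
    have hne : (ν t ω : ℝ) ≠ 0 := by positivity
    have hne1 : (ν t ω : ℝ) + 1 ≠ 0 := by positivity
    field_simp
  -- squeeze: t / ν t → Eτ
  have hsqueeze : Tendsto (fun t : ℝ => t / (ν t ω : ℝ)) atTop (nhds Eτ) := by
    apply tendsto_of_tendsto_of_tendsto_of_le_of_le' hTν hupper
    · filter_upwards [hev, eventually_ge_atTop 0] with t ⟨h1, _⟩ ht0
      gcongr
      exact (hνω t ht0).1
    · filter_upwards [hev, eventually_ge_atTop 0] with t ⟨h1, _⟩ ht0
      gcongr
      exact le_of_lt (hνω t ht0).2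
  -- invert: ν t / t → 1/Eτ
  have hinv : Tendsto (fun t : ℝ => (ν t ω : ℝ) / t) atTop (nhds Eτ⁻¹) := by
    have := hsqueeze.inv₀ (ne_of_gt hEτpos)
    apply this.congr'
    filter_upwards [] with t
    exact inv_div _ _
  -- conclude
  have hfinal := hWν.mul hinv
  have : Ew * Eτ⁻¹ = Ew / Eτ := (div_eq_mul_inv _ _).symm
  rw [this] at hfinal
  apply hfinal.congr'
  filter_upwards [hev] with t ⟨h1, ht⟩
  have hne : (ν t ω : ℝ) ≠ 0 := by positivity
  rw [hZ]
  field_simp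
end

section
/- Uniform convergence in probability of the rescaled counting process: assume E(τ_1) < ∞ and set θ := 1/E(τ_1). Then for every s > 0 and every δ > 0, lim_{n→∞} P( sup_{0 ≤ t ≤ s} | ν(nt)/n − θ t | > δ ) = 0. -/
open MeasureTheory ProbabilityTheory Filter


/-- Uniform convergence on a compact interval of monotone functions converging
pointwise to a linear function. -/
lemma unif_lemma {θ S ε : ℝ} (hθ : 0 ≤ θ) (hS : 0 < S) (hε : 0 < ε)
    (f : ℕ → ℝ → ℝ) (hmono : ∀ n, MonotoneOn (f n) (Set.Icc 0 S))
    (hpt : ∀ t ∈ Set.Icc (0:ℝ) S, Tendsto (fun n => f n t) atTop (nhds (θ * t))) :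
    ∀ᶠ n in atTop, ∀ t ∈ Set.Icc (0:ℝ) S, |f n t - θ * t| ≤ ε := by
  obtain ⟨K0, hK0⟩ := exists_nat_gt (θ * S / (ε / 2))
  set K := max K0 1 with hKdef
  have hK1 : 1 ≤ K := le_max_right _ _
  have hKpos : (0:ℝ) < K := by exact_mod_cast Nat.lt_of_lt_of_le Nat.zero_lt_one hK1
  have hSK : 0 < S / K := div_pos hS hKpos
  have hstep : θ * (S / K) ≤ ε / 2 := by
    have hK0' : θ * S / (ε / 2) < K := lt_of_lt_of_le hK0 (by exact_mod_cast le_max_left K0 1)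
    have : θ * S < K * (ε / 2) := by
      rw [div_lt_iff₀ (half_pos hε)] at hK0'
      linarith
    rw [mul_div_assoc'] at *
    rw [div_le_iff₀ hKpos]
    linarith [this]
  set g : ℕ → ℝ := fun j => (j : ℝ) * (S / K) with hg
  have hgmem : ∀ j ≤ K, g j ∈ Set.Icc (0:ℝ) S := by
    intro j hj
    constructor
    · positivity
    · have : (j : ℝ) ≤ K := by exact_mod_cast hj
      calc (j:ℝ) * (S / K) ≤ K * (S / K) := by
            apply mul_le_mul_of_nonneg_right this hSK.le
        _ = S := by field_simp
  have hev : ∀ᶠ n in atTop, ∀ j ∈ Finset.range (K + 1), |f n (g j) - θ * g j| ≤ ε / 2 := by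
    rw [Filter.eventually_all_finset]
    intro j hj
    have hjK : j ≤ K := Nat.lt_succ_iff.mp (Finset.mem_range.mp hj)
    have := Metric.tendsto_nhds.mp (hpt (g j) (hgmem j hjK)) (ε / 2) (half_pos hε)
    filter_upwards [this] with n hn
    rw [Real.dist_eq] at hn; exact hn.le
  filter_upwards [hev] with n hn t ht
  obtain ⟨ht0, htS⟩ := ht
  set j : ℕ := min (Nat.floor (t / (S / K))) (K - 1) with hjdef
  have hjK : j + 1 ≤ K := by
    have : j ≤ K - 1 := min_le_right _ _
    omega
  have hjlow : g j ≤ t := by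
    have h1 : (j : ℝ) ≤ t / (S / K) := by
      have : (j : ℝ) ≤ (Nat.floor (t / (S / K)) : ℝ) := by
        exact_mod_cast min_le_left _ _
      exact this.trans (Nat.floor_le (by positivity))
    calc g j = (j:ℝ) * (S / K) := rfl
      _ ≤ (t / (S / K)) * (S / K) := mul_le_mul_of_nonneg_right h1 hSK.le
      _ = t := by field_simp
  have hjhigh : t ≤ g (j + 1) := by
    rcases le_or_gt (Nat.floor (t / (S / K))) (K - 1) with h | h
    · have hjeq : j = Nat.floor (t / (S / K)) := min_eq_left h
      have : t / (S / K) < (j : ℝ) + 1 := by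
        rw [hjeq]; exact Nat.lt_floor_add_one _
      have := (div_lt_iff₀ hSK).mp this
      simp only [hg]
      push_cast
      linarith
    · have hjeq : j = K - 1 := min_eq_right h.le
      have : j + 1 = K := by omega
      rw [this]
      calc t ≤ S := htS
        _ = (K : ℝ) * (S / K) := by field_simp
  have hsub : g (j+1) - g j = S / K := by
    simp only [hg]; push_cast; ring
  have hmem1 : g j ∈ Set.Icc (0:ℝ) S := hgmem j (by omega)
  have hmem2 : g (j+1) ∈ Set.Icc (0:ℝ) S := hgmem (j+1) hjK
  have htmem : t ∈ Set.Icc (0:ℝ) S := ⟨ht0, htS⟩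
  have hb1 := hn j (Finset.mem_range.mpr (by omega))
  have hb2 := hn (j+1) (Finset.mem_range.mpr (by omega))
  have hf1 : f n (g j) ≤ f n t := hmono n hmem1 htmem hjlow
  have hf2 : f n t ≤ f n (g (j+1)) := hmono n htmem hmem2 hjhigh
  rw [abs_le] at *
  constructor
  · have h1 : θ * (t - g j) ≤ θ * (S / K) :=
      mul_le_mul_of_nonneg_left (by linarith) hθ
    nlinarith [hb1.1, hf1]
  · have h1 : θ * (g (j+1) - t) ≤ θ * (S / K) :=
      mul_le_mul_of_nonneg_left (by linarith) hθ
    nlinarith [hb2.2, hf2]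

lemma renewal_pt (T : ℕ → ℝ) (c t : ℝ) (hc : 0 < c) (ht : 0 < t)
    (hmono : StrictMono T)
    (hlim : Tendsto (fun m : ℕ => T m / m) atTop (nhds c))
    (a : ℕ → ℕ) (ha : ∀ n : ℕ, T (a n) ≤ (n:ℝ) * t ∧ (n:ℝ) * t < T (a n + 1)) :
    Tendsto (fun n : ℕ => (a n : ℝ) / n) atTop (nhds (t / c)) := by
  -- a n → ∞
  have hatop : Tendsto a atTop atTop := by
    rw [tendsto_atTop]
    intro m
    obtain ⟨N, hN⟩ := exists_nat_ge (T (m + 1) / t)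
    filter_upwards [eventually_ge_atTop N] with n hn
    have h1 : T (m+1) ≤ (n:ℝ) * t := by
      have : (N:ℝ) ≤ n := by exact_mod_cast hn
      have := (div_le_iff₀ ht).mp (hN.trans this)
      linarith
    have h2 : T (m+1) < T (a n + 1) := lt_of_le_of_lt h1 (ha n).2
    have := hmono.lt_iff_lt.mp h2
    omega
  have h1 : Tendsto (fun n => T (a n) / (a n : ℝ)) atTop (nhds c) := by
    exact hlim.comp hatop
  have hatop1 : Tendsto (fun n => a n + 1) atTop atTop :=
    tendsto_atTop_mono (fun n => Nat.le_succ (a n)) hatop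
  have h2 : Tendsto (fun n => T (a n + 1) / ((a n : ℝ) + 1)) atTop (nhds c) := by
    have h := hlim.comp hatop1
    have heq : (fun n => T (a n + 1) / ((a n : ℝ) + 1)) = (fun m : ℕ => T m / m) ∘ (fun n => a n + 1) := by
      funext n; simp [Function.comp]
    rw [heq]; exact h
  have hrat : Tendsto (fun n => ((a n : ℝ) + 1) / (a n : ℝ)) atTop (nhds 1) := by
    have : Tendsto (fun m : ℕ => ((m : ℝ) + 1) / (m : ℝ)) atTop (nhds 1) := by
      have h := Tendsto.add
        (tendsto_const_nhds : Tendsto (fun _ : ℕ => (1:ℝ)) atTop (nhds 1))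
        tendsto_one_div_atTop_nhds_zero_nat
      simp only [add_zero] at h
      apply h.congr'
      filter_upwards [eventually_gt_atTop 0] with m hm
      have : (m:ℝ) ≠ 0 := by positivity
      field_simp
    exact this.comp hatop
  have h3 : Tendsto (fun n => T (a n + 1) / (a n : ℝ)) atTop (nhds c) := by
    have := h2.mul hrat
    rw [mul_one] at this
    apply this.congr'
    filter_upwards [hatop.eventually (eventually_gt_atTop 0)] with n hn
    have : (a n : ℝ) ≠ 0 := by positivity
    have h1 : ((a n:ℝ) + 1) ≠ 0 := by positivity
    field_simp
  -- squeeze: b n := n*t / a n → c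
  have hb : Tendsto (fun n : ℕ => (n:ℝ) * t / (a n : ℝ)) atTop (nhds c) := by
    apply tendsto_of_tendsto_of_tendsto_of_le_of_le' h1 h3
    · filter_upwards [hatop.eventually (eventually_gt_atTop 0)] with n hn
      have hpos : (0:ℝ) < a n := by exact_mod_cast hn
      have := (ha n).1
      gcongr
    · filter_upwards [hatop.eventually (eventually_gt_atTop 0)] with n hn
      have hpos : (0:ℝ) < a n := by exact_mod_cast hn
      have := (ha n).2.le
      gcongr
  have hb' := hb.div_const c
  -- a n / n = t / (n*t/a n)
  have hinv : Tendsto (fun n : ℕ => t / ((n:ℝ) * t / (a n : ℝ))) atTop (nhds (t / c)) :=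
    Tendsto.div tendsto_const_nhds hb hc.ne'
  apply hinv.congr'
  filter_upwards [hatop.eventually (eventually_gt_atTop 0), eventually_gt_atTop 0] with n hn hn0
  have hpos : (0:ℝ) < a n := by exact_mod_cast hn
  have hnpos : (0:ℝ) < n := by exact_mod_cast hn0
  field_simp

/-- **Uniform convergence in probability of the rescaled counting process.**
Let `(τ i)_{i≥1}` be i.i.d. with values in `(0,∞)`, `T m` the partial sums and
`ν t = max {m : T m ≤ t}`. Assume `E(τ 1) < ∞` and set `θ = 1 / E(τ 1)`. Then for every
`s > 0` and `δ > 0`, `P( sup_{0 ≤ t ≤ s} |ν(n t)/n − θ t| > δ ) → 0` as `n → ∞`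
(the event `sup > δ` being expressed as `∃ t ∈ [0,s]` with value `> δ`). -/
theorem stmt5
    {Ω : Type*} [MeasurableSpace Ω] (μ : Measure Ω) [IsProbabilityMeasure μ]
    (τ : ℕ → Ω → ℝ)
    (hmeas : ∀ i, Measurable (τ i))
    (hindep : iIndepFun τ μ)
    (hident : ∀ i, IdentDistrib (τ i) (τ 1) μ μ)
    (hτpos : ∀ i, ∀ᵐ ω ∂μ, 0 < τ i ω)
    (hτ : Integrable (τ 1) μ)
    (T : ℕ → Ω → ℝ)
    (hT : ∀ m ω, T m ω = ∑ i ∈ Finset.Icc 1 m, τ i ω)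
    (ν : ℝ → Ω → ℕ)
    (hν : ∀ᵐ ω ∂μ, ∀ t : ℝ, 0 ≤ t → T (ν t ω) ω ≤ t ∧ t < T (ν t ω + 1) ω)
    (θ : ℝ) (hθ : θ = 1 / ∫ ω', τ 1 ω' ∂μ)
    (s δ : ℝ) (hs : 0 < s) (hδ : 0 < δ) :
    Tendsto
      (fun n : ℕ =>
        μ {ω | ∃ t ∈ Set.Icc (0 : ℝ) s,
            δ < |(ν ((n : ℝ) * t) ω : ℝ) / (n : ℝ) - θ * t|})
      atTop (nhds 0) := by
  classical
  set c : ℝ := ∫ ω', τ 1 ω' ∂μ with hcdef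
  -- positivity of the mean
  have hcpos : 0 < c := by
    rw [hcdef, integral_pos_iff_support_of_nonneg_ae ((hτpos 1).mono fun ω h => h.le) hτ]
    rw [pos_iff_ne_zero]
    intro h0
    have hz : ∀ᵐ ω ∂μ, τ 1 ω = 0 := by
      rw [ae_iff]
      exact h0
    obtain ⟨ω, h1, h2⟩ := (hz.and (hτpos 1)).exists
    linarith
  have hθpos : 0 < θ := by rw [hθ]; positivity
  have hθc : θ * 1 = 1 / c := by rw [hθ, mul_one]
  -- T as a sum over range
  have hTsum : ∀ n ω, T n ω = ∑ i ∈ Finset.range n, τ (i + 1) ω := by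
    intro n ω
    rw [hT]
    induction n with
    | zero => simp
    | succ n ih =>
      rw [Finset.sum_Icc_succ_top (by omega), Finset.sum_range_succ, ih]
  have hTmeas : ∀ m, Measurable (T m) := by
    intro m
    have : T m = fun ω => ∑ i ∈ Finset.Icc 1 m, τ i ω := funext (hT m)
    rw [this]
    exact Finset.measurable_sum _ fun i _ => hmeas i
  -- strong law of large numbers
  have hpair : Pairwise (Function.onFun (IndepFun · · μ) fun i => τ (i + 1)) := by
    intro i j hij
    exact hindep.indepFun (by omega)
  have hid : ∀ i, IdentDistrib (τ (i + 1)) (τ (0 + 1)) μ μ := fun i =>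
    (hident (i + 1)).trans (hident 1).symm
  have hslln := strong_law_ae_real (fun i => τ (i + 1)) hτ hpair hid
  have hslln' : ∀ᵐ ω ∂μ, Tendsto (fun m : ℕ => T m ω / m) atTop (nhds c) := by
    filter_upwards [hslln] with ω hω
    have : (fun m : ℕ => T m ω / m)
        = fun m : ℕ => (∑ i ∈ Finset.range m, τ (i + 1) ω) / m := by
      funext m; rw [hTsum]
    rw [this]
    exact hω
  set S : ℝ := s + 1 with hSdef
  have hSpos : 0 < S := by positivity
  -- the good event
  have hae : ∀ᵐ ω ∂μ, (∀ i, 0 < τ i ω) ∧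
      Tendsto (fun m : ℕ => T m ω / m) atTop (nhds c) ∧
      (∀ t : ℝ, 0 ≤ t → T (ν t ω) ω ≤ t ∧ t < T (ν t ω + 1) ω) :=
    ((ae_all_iff.2 hτpos).and (hslln'.and hν)).mono fun ω h => ⟨h.1, h.2.1, h.2.2⟩
  set Good : Ω → Prop := fun ω => (∀ i, 0 < τ i ω) ∧
      Tendsto (fun m : ℕ => T m ω / m) atTop (nhds c) ∧
      (∀ t : ℝ, 0 ≤ t → T (ν t ω) ω ≤ t ∧ t < T (ν t ω + 1) ω) with hGooddef
  -- consequences of goodness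
  have hTmono : ∀ ω, Good ω → StrictMono (fun m => T m ω) := by
    intro ω hg
    apply strictMono_nat_of_lt_succ
    intro m
    have : T (m + 1) ω = T m ω + τ (m + 1) ω := by
      rw [hT, hT, Finset.sum_Icc_succ_top (by omega)]
    rw [this]
    linarith [hg.1 (m + 1)]
  have hT0 : ∀ ω, T 0 ω = 0 := by intro ω; rw [hT]; simp
  have hν0 : ∀ ω, Good ω → ν 0 ω = 0 := by
    intro ω hg
    by_contra h0
    have h1 : T 0 ω < T (ν 0 ω) ω := (hTmono ω hg) (Nat.pos_of_ne_zero h0)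
    have h2 := (hg.2.2 0 le_rfl).1
    rw [hT0] at h1
    linarith
  have hνmono : ∀ ω, Good ω → ∀ t t' : ℝ, 0 ≤ t → t ≤ t' → ν t ω ≤ ν t' ω := by
    intro ω hg t t' ht htt'
    have h1 := (hg.2.2 t ht).1
    have h2 := (hg.2.2 t' (ht.trans htt')).2
    have : T (ν t ω) ω < T (ν t' ω + 1) ω := by linarith
    have := (hTmono ω hg).lt_iff_lt.mp this
    omega
  -- uniform convergence on [0, S] for good ω
  have huniform : ∀ ω, Good ω → ∀ᶠ n : ℕ in atTop,
      ∀ t ∈ Set.Icc (0 : ℝ) S, |(ν ((n : ℝ) * t) ω : ℝ) / (n : ℝ) - θ * t| ≤ δ / 2 := by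
    intro ω hg
    apply unif_lemma hθpos.le hSpos (half_pos hδ)
      (f := fun (n : ℕ) (t : ℝ) => (ν ((n : ℝ) * t) ω : ℝ) / (n : ℝ))
    · intro n
      intro t ht t' ht' htt'
      have h1 : ν ((n : ℝ) * t) ω ≤ ν ((n : ℝ) * t') ω :=
        hνmono ω hg _ _ (mul_nonneg (Nat.cast_nonneg n) ht.1)
          (mul_le_mul_of_nonneg_left htt' (Nat.cast_nonneg n))
      rcases Nat.eq_zero_or_pos n with hn | hn
      · simp [hn]
      · have hnpos : (0 : ℝ) < n := by exact_mod_cast hn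
        exact (div_le_div_iff_of_pos_right hnpos).mpr (Nat.cast_le.mpr h1)
    · intro t ht
      rcases eq_or_lt_of_le ht.1 with h0 | h0
      · rw [← h0]
        simp only [mul_zero]
        exact tendsto_const_nhds.congr fun n => by norm_num [hν0 ω hg]
      · have key := renewal_pt (fun m => T m ω) c t hcpos h0 (hTmono ω hg) hg.2.1
          (fun n => ν ((n : ℝ) * t) ω)
          (fun n => hg.2.2 ((n : ℝ) * t) (by positivity))
        have : θ * t = t / c := by rw [hθ]; ring
        rw [this]
        exact key
  -- the approximating measurable events
  set E : ℕ → Set Ω := fun n =>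
    ⋃ (q : ℚ) (_ : 0 ≤ (q : ℝ) ∧ (q : ℝ) ≤ S) (m : ℕ)
      (_ : δ / 2 < |(m : ℝ) / (n : ℝ) - θ * q|),
      ({ω | T m ω ≤ (n : ℝ) * q} ∩ {ω | (n : ℝ) * q < T (m + 1) ω}) with hEdef
  have hEmeas : ∀ n, MeasurableSet (E n) := by
    intro n
    apply MeasurableSet.iUnion; intro q
    apply MeasurableSet.iUnion; intro _
    apply MeasurableSet.iUnion; intro m
    apply MeasurableSet.iUnion; intro _
    exact (measurableSet_le (hTmeas m) measurable_const).inter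
      (measurableSet_lt measurable_const (hTmeas (m + 1)))
  have hEmem : ∀ n ω, ω ∈ E n ↔ ∃ q : ℚ, (0 ≤ (q : ℝ) ∧ (q : ℝ) ≤ S) ∧ ∃ m : ℕ,
      δ / 2 < |(m : ℝ) / (n : ℝ) - θ * q| ∧ T m ω ≤ (n : ℝ) * q ∧ (n : ℝ) * q < T (m + 1) ω := by
    intro n ω
    simp only [hEdef, Set.mem_iUnion, Set.mem_inter_iff, Set.mem_setOf_eq, exists_prop]
  -- containment of the bad event in the measurable approximation, for good ω
  have hcont : ∀ n : ℕ, ∀ ω, Good ω →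
      (∃ t ∈ Set.Icc (0 : ℝ) s, δ < |(ν ((n : ℝ) * t) ω : ℝ) / (n : ℝ) - θ * t|) →
      ω ∈ E n := by
    rintro n ω hg ⟨t, ht, habs⟩
    set η : ℝ := min 1 (δ / (2 * θ)) with hηdef
    have hηpos : 0 < η := lt_min one_pos (by positivity)
    have hη1 : η ≤ 1 := min_le_left _ _
    have hη2 : θ * η ≤ δ / 2 := by
      have h := min_le_right 1 (δ / (2 * θ))
      calc θ * η ≤ θ * (δ / (2 * θ)) := mul_le_mul_of_nonneg_left h hθpos.le
        _ = δ / 2 := by field_simp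
    have hdiv : ∀ a b : ℕ, a ≤ b → (a : ℝ) / (n : ℝ) ≤ (b : ℝ) / (n : ℝ) := by
      intro a b hab
      rcases Nat.eq_zero_or_pos n with hn | hn
      · simp [hn]
      · exact (div_le_div_iff_of_pos_right (by exact_mod_cast hn)).mpr (by exact_mod_cast hab)
    rw [hEmem]
    rcases lt_abs.mp habs with hpos | hneg
    · obtain ⟨q, hq1, hq2⟩ := exists_rat_btwn (lt_add_of_pos_right t hηpos)
      have hq0 : 0 ≤ (q : ℝ) := le_trans ht.1 hq1.le
      have hqS : (q : ℝ) ≤ S := by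
        simp only [hSdef]
        linarith [ht.2, hη1, hq2.le]
      have hb := hg.2.2 ((n : ℝ) * q) (mul_nonneg (Nat.cast_nonneg n) hq0)
      refine ⟨q, ⟨hq0, hqS⟩, ν ((n : ℝ) * q) ω, ?_, hb.1, hb.2⟩
      have hm1 : (ν ((n : ℝ) * t) ω : ℝ) / n ≤ (ν ((n : ℝ) * q) ω : ℝ) / n :=
        hdiv _ _ (hνmono ω hg _ _ (mul_nonneg (Nat.cast_nonneg n) ht.1)
          (mul_le_mul_of_nonneg_left hq1.le (Nat.cast_nonneg n)))
      have hθq : θ * q - θ * t ≤ θ * η := by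
        have h : (q : ℝ) - t ≤ η := by linarith [hq2.le]
        calc θ * q - θ * t = θ * ((q : ℝ) - t) := by ring
          _ ≤ θ * η := mul_le_mul_of_nonneg_left h hθpos.le
      have hkey : δ / 2 < (ν ((n : ℝ) * q) ω : ℝ) / n - θ * q := by linarith
      exact lt_of_lt_of_le hkey (le_abs_self _)
    · have hfnn : 0 ≤ (ν ((n : ℝ) * t) ω : ℝ) / n := by positivity
      have hθt : δ < θ * t := by linarith
      have htη : η < t := by
        have h1 : η ≤ δ / (2 * θ) := min_le_right _ _
        have h2 : δ / (2 * θ) < t := by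
          rw [div_lt_iff₀ (by positivity)]
          nlinarith
        linarith
      obtain ⟨q, hq1, hq2⟩ := exists_rat_btwn (sub_lt_self t hηpos)
      have hq0 : 0 ≤ (q : ℝ) := by linarith
      have hqS : (q : ℝ) ≤ S := by simp only [hSdef]; linarith [ht.2]
      have hb := hg.2.2 ((n : ℝ) * q) (mul_nonneg (Nat.cast_nonneg n) hq0)
      refine ⟨q, ⟨hq0, hqS⟩, ν ((n : ℝ) * q) ω, ?_, hb.1, hb.2⟩
      have hm1 : (ν ((n : ℝ) * q) ω : ℝ) / n ≤ (ν ((n : ℝ) * t) ω : ℝ) / n :=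
        hdiv _ _ (hνmono ω hg _ _ (mul_nonneg (Nat.cast_nonneg n) hq0)
          (mul_le_mul_of_nonneg_left hq2.le (Nat.cast_nonneg n)))
      have hθq : θ * t - θ * q ≤ θ * η := by
        have h : t - (q : ℝ) ≤ η := by linarith
        calc θ * t - θ * q = θ * (t - (q : ℝ)) := by ring
          _ ≤ θ * η := mul_le_mul_of_nonneg_left h hθpos.le
      have hkey : δ / 2 < -((ν ((n : ℝ) * q) ω : ℝ) / n - θ * q) := by linarith
      exact lt_of_lt_of_le hkey (neg_le_abs _)
  -- a.e. eventual non-membership in E n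
  have hnotin : ∀ᵐ ω ∂μ, ∀ᶠ n : ℕ in atTop, ω ∉ E n := by
    filter_upwards [hae] with ω hg
    filter_upwards [huniform ω hg] with n hn
    intro hmem
    rw [hEmem] at hmem
    obtain ⟨q, ⟨hq0, hqS⟩, m, habs, h1, h2⟩ := hmem
    have hb := hg.2.2 ((n : ℝ) * q) (mul_nonneg (Nat.cast_nonneg n) hq0)
    have hm : m = ν ((n : ℝ) * q) ω := by
      by_contra hne
      rcases Nat.lt_or_ge m (ν ((n : ℝ) * q) ω) with hlt | hge
      · have h3 : T (m + 1) ω ≤ T (ν ((n : ℝ) * q) ω) ω :=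
          (hTmono ω hg).monotone (by omega)
        linarith [hb.1]
      · have h3 : T (ν ((n : ℝ) * q) ω + 1) ω ≤ T m ω :=
          (hTmono ω hg).monotone (by omega)
        linarith [hb.2]
    have h4 := hn (q : ℝ) ⟨hq0, hqS⟩
    rw [hm] at habs
    linarith
  -- conclude by continuity from above
  set B : ℕ → Set Ω := fun n => ⋃ k, E (n + k) with hBdef
  have hBmeas : ∀ n, MeasurableSet (B n) := fun n => MeasurableSet.iUnion fun k => hEmeas _
  have hBanti : Antitone B := by
    intro m n hmn ω hω
    simp only [hBdef, Set.mem_iUnion] at *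
    obtain ⟨k, hk⟩ := hω
    exact ⟨n - m + k, by rwa [show m + (n - m + k) = n + k by omega]⟩
  have hBnull : μ (⋂ n, B n) = 0 := by
    have h0 : μ {ω | ¬ ∀ᶠ n : ℕ in atTop, ω ∉ E n} = 0 := ae_iff.mp hnotin
    apply measure_mono_null _ h0
    intro ω hω hev
    obtain ⟨N, hN⟩ := eventually_atTop.mp hev
    have hBN : ω ∈ B N := Set.mem_iInter.mp hω N
    simp only [hBdef, Set.mem_iUnion] at hBN
    obtain ⟨k, hk⟩ := hBN
    exact hN (N + k) (Nat.le_add_right _ _) hk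
  have htend : Tendsto (fun n => μ (B n)) atTop (nhds 0) := by
    have h := tendsto_measure_iInter_atTop (fun n => (hBmeas n).nullMeasurableSet) hBanti
      ⟨0, measure_ne_top μ _⟩
    rwa [hBnull] at h
  apply tendsto_of_tendsto_of_tendsto_of_le_of_le tendsto_const_nhds htend
    (fun n => zero_le)
  intro n
  calc μ {ω | ∃ t ∈ Set.Icc (0 : ℝ) s, δ < |(ν ((n : ℝ) * t) ω : ℝ) / (n : ℝ) - θ * t|}
      ≤ μ (E n ∪ {ω | ¬ Good ω}) := by
        apply measure_mono
        intro ω hω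
        by_cases hg : Good ω
        · exact Or.inl (hcont n ω hg hω)
        · exact Or.inr hg
    _ ≤ μ (E n) + μ {ω | ¬ Good ω} := measure_union_le _ _
    _ = μ (E n) := by rw [ae_iff.mp hae, add_zero]
    _ ≤ μ (B n) := measure_mono (by
        intro ω hω
        simp only [hBdef, Set.mem_iUnion]
        exact ⟨0, by simpa using hω⟩)
end

section
/- Derrida's normalization identity: Σ_{k=1}^{N} r_k = Γ(γ)/ξ_0^+ + c(γ) + Δ c(γ̄). -/
lemma derrida_disj (a b c : ℤ) : Disjoint (Finset.Ioc a b) (Finset.Ioc b c) := by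
  rw [Finset.disjoint_left]
  intro x hx hx'
  simp only [Finset.mem_Ioc] at hx hx'
  omega

lemma derrida_prod_Ioc_mul (f : ℤ → ℝ) {a b c : ℤ} (hab : a ≤ b) (hbc : b ≤ c) :
    (∏ j ∈ Finset.Ioc a b, f j) * ∏ j ∈ Finset.Ioc b c, f j = ∏ j ∈ Finset.Ioc a c, f j := by
  rw [← Finset.prod_union (derrida_disj a b c), Finset.Ioc_union_Ioc_eq_Ioc hab hbc]

lemma derrida_swap (a b : ℤ) (f : ℤ → ℤ → ℝ) :
    ∑ j ∈ Finset.Icc a b, ∑ k ∈ Finset.Icc a j, f k j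
      = ∑ k ∈ Finset.Icc a b, ∑ j ∈ Finset.Icc k b, f k j := by
  rw [Finset.sum_sigma', Finset.sum_sigma']
  refine Finset.sum_nbij' (fun p => ⟨p.2, p.1⟩) (fun p => ⟨p.2, p.1⟩) ?_ ?_ ?_ ?_ ?_ <;>
    simp only [Finset.mem_sigma, Finset.mem_Icc] <;> intros <;> first | omega | trivial

/-- **Derrida's normalization identity.**
Fix `N ≥ 1` and `N`-periodic positive sequences `ξ⁺, ξ⁻ : ℤ → ℝ`; set `ρ x = ξ⁻ x / ξ⁺ x`,
`Δ = ρ 1 ⋯ ρ N`, `r k = (1/ξ⁺ k) Σ_{i=k}^{k+N−1} Π_{j=k+1}^{i} ρ j`,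
`Γ = 1 + Σ_{i=1}^{N−1} ρ 1 ⋯ ρ i`,
`c = Σ_{1 ≤ k ≤ j ≤ N−1} (1/ξ⁺ k) ρ_{k+1} ⋯ ρ_j` and
`c̄ = Σ_{1 ≤ k ≤ j ≤ N−1} (1/ξ⁻ (−k)) ρ_{−(k+1)}⁻¹ ⋯ ρ_{−j}⁻¹`.
Then `Σ_{k=1}^N r k = Γ / ξ⁺ 0 + c + Δ c̄`. -/
theorem stmt8 (N : ℕ) (hN : 1 ≤ N) (ξp ξm : ℤ → ℝ)
    (hξp_pos : ∀ x, 0 < ξp x) (hξm_pos : ∀ x, 0 < ξm x)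
    (hξp_per : ∀ x : ℤ, ξp (x + N) = ξp x) (hξm_per : ∀ x : ℤ, ξm (x + N) = ξm x)
    (ρ : ℤ → ℝ) (hρ : ∀ x, ρ x = ξm x / ξp x)
    (Δ : ℝ) (hΔ : Δ = ∏ j ∈ Finset.Icc (1 : ℤ) (N : ℤ), ρ j)
    (r : ℤ → ℝ)
    (hr : ∀ k, r k = (1 / ξp k) *
      ∑ i ∈ Finset.Icc k (k + (N : ℤ) - 1), ∏ j ∈ Finset.Icc (k + 1) i, ρ j)
    (Γ c cbar : ℝ)
    (hΓ : Γ = 1 + ∑ i ∈ Finset.Icc (1 : ℤ) ((N : ℤ) - 1),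
      ∏ j ∈ Finset.Icc (1 : ℤ) i, ρ j)
    (hc : c = ∑ j ∈ Finset.Icc (1 : ℤ) ((N : ℤ) - 1), ∑ k ∈ Finset.Icc (1 : ℤ) j,
      (1 / ξp k) * ∏ m ∈ Finset.Icc (k + 1) j, ρ m)
    (hcbar : cbar = ∑ j ∈ Finset.Icc (1 : ℤ) ((N : ℤ) - 1), ∑ k ∈ Finset.Icc (1 : ℤ) j,
      (1 / ξm (-k)) * ∏ m ∈ Finset.Icc (k + 1) j, (ρ (-m))⁻¹) :
    ∑ k ∈ Finset.Icc (1 : ℤ) (N : ℤ), r k = Γ / ξp 0 + c + Δ * cbar := by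
  have hN1 : (1:ℤ) ≤ (N:ℤ) := by exact_mod_cast hN
  have hξp_ne : ∀ x, ξp x ≠ 0 := fun x => (hξp_pos x).ne'
  have hρ_ne : ∀ x, ρ x ≠ 0 := fun x => by
    rw [hρ]; exact div_ne_zero (hξm_pos x).ne' (hξp_ne x)
  have hρ_per : ∀ x : ℤ, ρ (x + N) = ρ x := fun x => by rw [hρ, hρ, hξp_per, hξm_per]
  set P : ℤ → ℝ := fun i => ∏ j ∈ Finset.Ioc 0 i, ρ j with hPdef
  have hP_ne : ∀ i, P i ≠ 0 := fun i => Finset.prod_ne_zero_iff.mpr fun j _ => hρ_ne j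
  have hP0 : P 0 = 1 := by simp [hPdef]
  have hIccIoc : ∀ a b : ℤ, Finset.Icc (a+1) b = Finset.Ioc a b := by
    intro a b; ext x; simp only [Finset.mem_Icc, Finset.mem_Ioc]; omega
  have hIcc1 : ∀ i : ℤ, Finset.Icc (1:ℤ) i = Finset.Ioc 0 i := by
    intro i; ext x; simp only [Finset.mem_Icc, Finset.mem_Ioc]; omega
  have hPmul : ∀ {a b : ℤ}, 0 ≤ a → a ≤ b → P a * ∏ j ∈ Finset.Ioc a b, ρ j = P b :=
    fun ha hab => derrida_prod_Ioc_mul ρ ha hab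
  have hshift : ∀ a b : ℤ, ∏ j ∈ Finset.Ioc ((N:ℤ) + a) ((N:ℤ) + b), ρ j
      = ∏ j ∈ Finset.Ioc a b, ρ j := by
    intro a b
    rw [← Finset.map_add_left_Ioc, Finset.prod_map]
    exact Finset.prod_congr rfl fun x _ => by
      simp only [addLeftEmbedding_apply]; rw [add_comm, hρ_per]
  have hΔP : Δ = P (N:ℤ) := by rw [hΔ, hIcc1]
  have hΓP : Γ = ∑ s ∈ Finset.Icc (0:ℤ) ((N:ℤ)-1), P s := by
    have hins : Finset.Icc (0:ℤ) ((N:ℤ)-1) = insert 0 (Finset.Icc 1 ((N:ℤ)-1)) := by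
      ext x; simp only [Finset.mem_Icc, Finset.mem_insert]; omega
    rw [hΓ, hins, Finset.sum_insert (by simp), hP0]
    exact congrArg (1 + ·) (Finset.sum_congr rfl fun i _ => by rw [hIcc1])
  -- step 1: rewrite each r k
  have hrk : ∀ k ∈ Finset.Icc (1:ℤ) (N:ℤ),
      r k = (∑ i ∈ Finset.Icc k ((N:ℤ)-1), (1/ξp k) * ∏ j ∈ Finset.Ioc k i, ρ j)
        + (1/ξp k * ∏ j ∈ Finset.Ioc k (N:ℤ), ρ j) * ∑ s ∈ Finset.Icc (0:ℤ) (k-1), P s := by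
    intro k hk
    simp only [Finset.mem_Icc] at hk
    rw [hr]
    have e1 : ∑ i ∈ Finset.Icc k (k+(N:ℤ)-1), ∏ j ∈ Finset.Icc (k+1) i, ρ j
        = ∑ i ∈ Finset.Ioc (k-1) (k+(N:ℤ)-1), ∏ j ∈ Finset.Ioc k i, ρ j := by
      have h : Finset.Icc k (k+(N:ℤ)-1) = Finset.Ioc (k-1) (k+(N:ℤ)-1) := by
        ext x; simp only [Finset.mem_Icc, Finset.mem_Ioc]; omega
      rw [h]
      exact Finset.sum_congr rfl fun i _ => by rw [hIccIoc]
    have e2 : Finset.Ioc (k-1) (k+(N:ℤ)-1)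
        = Finset.Ioc (k-1) ((N:ℤ)-1) ∪ Finset.Ioc ((N:ℤ)-1) (k+(N:ℤ)-1) :=
      (Finset.Ioc_union_Ioc_eq_Ioc (by omega) (by omega)).symm
    rw [e1, e2, Finset.sum_union (derrida_disj _ _ _), mul_add]
    congr 1
    · have h : Finset.Ioc (k-1) ((N:ℤ)-1) = Finset.Icc k ((N:ℤ)-1) := by
        ext x; simp only [Finset.mem_Icc, Finset.mem_Ioc]; omega
      rw [h, Finset.mul_sum]
    · have e3 : Finset.Ioc ((N:ℤ)-1) (k+(N:ℤ)-1)
          = (Finset.Ioc (-1:ℤ) (k-1)).map (addLeftEmbedding (N:ℤ)) := by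
        rw [Finset.map_add_left_Ioc]; congr 1 <;> ring
      rw [e3, Finset.sum_map]
      have e4 : ∀ s ∈ Finset.Ioc (-1:ℤ) (k-1),
          ∏ j ∈ Finset.Ioc k (addLeftEmbedding (N:ℤ) s), ρ j
            = (∏ j ∈ Finset.Ioc k (N:ℤ), ρ j) * P s := by
        intro s hs
        simp only [Finset.mem_Ioc] at hs
        simp only [addLeftEmbedding_apply]
        rw [← derrida_prod_Ioc_mul ρ (by omega : k ≤ (N:ℤ)) (by omega : (N:ℤ) ≤ (N:ℤ) + s)]
        congr 1
        have := hshift 0 s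
        simpa using this
      rw [Finset.sum_congr rfl e4, ← Finset.mul_sum]
      have h : Finset.Ioc (-1:ℤ) (k-1) = Finset.Icc (0:ℤ) (k-1) := by
        ext x; simp only [Finset.mem_Icc, Finset.mem_Ioc]; omega
      rw [h]; ring
  rw [Finset.sum_congr rfl hrk, Finset.sum_add_distrib]
  -- part A equals c
  have hA : ∑ k ∈ Finset.Icc (1:ℤ) (N:ℤ),
      ∑ i ∈ Finset.Icc k ((N:ℤ)-1), (1/ξp k) * ∏ j ∈ Finset.Ioc k i, ρ j = c := by
    have hsub : Finset.Icc (1:ℤ) ((N:ℤ)-1) ⊆ Finset.Icc (1:ℤ) (N:ℤ) :=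
      Finset.Icc_subset_Icc_right (by omega)
    rw [← Finset.sum_subset hsub ?zero]
    case zero =>
      intro x hx hx'
      simp only [Finset.mem_Icc] at hx hx'
      have hxN : x = (N:ℤ) := by omega
      subst hxN
      rw [Finset.Icc_eq_empty (by omega), Finset.sum_empty]
    have hc' : c = ∑ k ∈ Finset.Icc (1:ℤ) ((N:ℤ)-1), ∑ j ∈ Finset.Icc k ((N:ℤ)-1),
        (1/ξp k) * ∏ m ∈ Finset.Icc (k+1) j, ρ m :=
      hc.trans (derrida_swap 1 ((N:ℤ)-1) (fun k j => (1/ξp k) * ∏ m ∈ Finset.Icc (k+1) j, ρ m))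
    rw [hc']
    apply Finset.sum_congr rfl; intro k _
    apply Finset.sum_congr rfl; intro j _
    rw [hIccIoc]
  -- part B equals Γ/ξp 0 + Δ * cbar
  have hB : ∑ k ∈ Finset.Icc (1:ℤ) (N:ℤ),
      (1/ξp k * ∏ j ∈ Finset.Ioc k (N:ℤ), ρ j) * ∑ s ∈ Finset.Icc (0:ℤ) (k-1), P s
        = Γ / ξp 0 + Δ * cbar := by
    have hins : Finset.Icc (1:ℤ) (N:ℤ) = insert (N:ℤ) (Finset.Icc 1 ((N:ℤ)-1)) := by
      ext x; simp only [Finset.mem_Icc, Finset.mem_insert]; omega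
    rw [hins, Finset.sum_insert (by simp)]
    have hterm_N : (1/ξp (N:ℤ) * ∏ j ∈ Finset.Ioc (N:ℤ) (N:ℤ), ρ j)
        * ∑ s ∈ Finset.Icc (0:ℤ) ((N:ℤ)-1), P s = Γ / ξp 0 := by
      have hξpN : ξp (N:ℤ) = ξp 0 := by simpa using hξp_per 0
      rw [Finset.Ioc_self, Finset.prod_empty, hξpN, ← hΓP]; ring
    have hprodk : ∀ k ∈ Finset.Icc (1:ℤ) ((N:ℤ)-1),
        (1/ξp k * ∏ j ∈ Finset.Ioc k (N:ℤ), ρ j) * ∑ s ∈ Finset.Icc (0:ℤ) (k-1), P s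
          = Δ * ∑ s ∈ Finset.Icc (0:ℤ) (k-1), P s / (ξp k * P k) := by
      intro k hk
      simp only [Finset.mem_Icc] at hk
      have h1 : ∏ j ∈ Finset.Ioc k (N:ℤ), ρ j = Δ / P k := by
        rw [eq_div_iff (hP_ne k), hΔP, mul_comm]
        exact hPmul (by omega) (by omega)
      rw [h1, Finset.mul_sum, Finset.mul_sum]
      apply Finset.sum_congr rfl; intro s _
      field_simp
    rw [hterm_N, Finset.sum_congr rfl hprodk, ← Finset.mul_sum]
    congr 1
    congr 1
    -- cbar transformation
    rw [hcbar]
    have hterm : ∀ j ∈ Finset.Icc (1:ℤ) ((N:ℤ)-1), ∀ k ∈ Finset.Icc (1:ℤ) j,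
        (1/ξm (-k)) * ∏ m ∈ Finset.Icc (k+1) j, (ρ (-m))⁻¹
          = P ((N:ℤ)-1-j) / (ξp ((N:ℤ)-k) * P ((N:ℤ)-k)) := by
      intro j hj k hk
      simp only [Finset.mem_Icc] at hj hk
      have hm : ∀ m ∈ Finset.Icc (k+1) j, (ρ (-m))⁻¹ = (ρ ((N:ℤ)-m))⁻¹ := by
        intro m _
        rw [show (N:ℤ)-m = -m + (N:ℤ) by ring, hρ_per]
      rw [Finset.prod_congr rfl hm]
      have hre : ∏ m ∈ Finset.Icc (k+1) j, (ρ ((N:ℤ)-m))⁻¹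
          = ∏ t ∈ Finset.Ioc ((N:ℤ)-1-j) ((N:ℤ)-1-k), (ρ t)⁻¹ := by
        refine Finset.prod_nbij' (fun m => (N:ℤ) - m) (fun t => (N:ℤ) - t)
          ?_ ?_ ?_ ?_ ?_ <;>
          simp only [Finset.mem_Icc, Finset.mem_Ioc] <;> intros <;> first | omega | trivial
      rw [hre, Finset.prod_inv_distrib]
      have h2 : ∏ t ∈ Finset.Ioc ((N:ℤ)-1-j) ((N:ℤ)-1-k), ρ t
          = P ((N:ℤ)-1-k) / P ((N:ℤ)-1-j) := by
        rw [eq_div_iff (hP_ne _), mul_comm]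
        exact hPmul (by omega) (by omega)
      have h3 : ξm (-k) = ρ ((N:ℤ)-k) * ξp ((N:ℤ)-k) := by
        rw [hρ, div_mul_cancel₀ _ (hξp_ne _), show (N:ℤ)-k = -k + (N:ℤ) by ring, hξm_per]
      have h4 : P ((N:ℤ)-k) = P ((N:ℤ)-1-k) * ρ ((N:ℤ)-k) := by
        have h5 := hPmul (show (0:ℤ) ≤ (N:ℤ)-1-k by omega) (show (N:ℤ)-1-k ≤ (N:ℤ)-k by omega)
        rw [← h5]
        congr 1
        have hsing : Finset.Ioc ((N:ℤ)-1-k) ((N:ℤ)-k) = {(N:ℤ)-k} := by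
          ext x; simp only [Finset.mem_Ioc, Finset.mem_singleton]; omega
        rw [hsing, Finset.prod_singleton]
      rw [h2, h3, h4, inv_div, div_mul_div_comm, one_mul]
      congr 1
      ring
    rw [Finset.sum_congr rfl (fun j hj => Finset.sum_congr rfl (hterm j hj))]
    rw [Finset.sum_sigma', Finset.sum_sigma']
    refine Finset.sum_nbij' (fun p => ⟨(N:ℤ) - 1 - p.2, (N:ℤ) - p.1⟩)
      (fun q => ⟨(N:ℤ) - q.2, (N:ℤ) - 1 - q.1⟩) ?_ ?_ ?_ ?_ ?_
    · intro p hp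
      rcases p with ⟨x, y⟩
      simp only [Finset.mem_sigma, Finset.mem_Icc] at hp ⊢
      omega
    · intro p hp
      rcases p with ⟨x, y⟩
      simp only [Finset.mem_sigma, Finset.mem_Icc] at hp ⊢
      omega
    · intro p hp
      rcases p with ⟨x, y⟩
      simp only [Finset.mem_sigma, Finset.mem_Icc] at hp
      dsimp only
      simp only [show ∀ t : ℤ, (N:ℤ) - ((N:ℤ) - t) = t from fun t => by omega,
        show ∀ t : ℤ, (N:ℤ) - 1 - ((N:ℤ) - 1 - t) = t from fun t => by omega]
    · intro p hp
      rcases p with ⟨x, y⟩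
      simp only [Finset.mem_sigma, Finset.mem_Icc] at hp
      dsimp only
      simp only [show ∀ t : ℤ, (N:ℤ) - ((N:ℤ) - t) = t from fun t => by omega,
        show ∀ t : ℤ, (N:ℤ) - 1 - ((N:ℤ) - 1 - t) = t from fun t => by omega]
    · intro p hp
      rcases p with ⟨x, y⟩
      simp only [Finset.mem_sigma, Finset.mem_Icc] at hp
      rw [show (N:ℤ) - 1 - ((N:ℤ) - 1 - y) = y by omega,
        show (N:ℤ) - ((N:ℤ) - x) = x by omega]
  rw [hA, hB]
  ring
end

section
/- Expected-hitting-time interpolation along a linear chain: let n ≥ 2, let r_i^−, r_i^+ > 0 for i = 1, …, n−1, and let ψ : {0, 1, …, n} → ℝ satisfy r_i^− (ψ(i) − ψ(i−1)) + r_i^+ (ψ(i) − ψ(i+1)) = 1 for all i = 1, …, n−1. Then ψ(1) = ψ(0) + (1/Γ)(ψ(n) − ψ(0)) + c(γ)/Γ. -/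
/-- **Expected-hitting-time interpolation along a linear chain.**
Let `n ≥ 2`, `r⁻ i, r⁺ i > 0` for `i = 1, …, n−1`, and `ψ : ℕ → ℝ` satisfy
`r⁻ i (ψ i − ψ (i−1)) + r⁺ i (ψ i − ψ (i+1)) = 1` for `i = 1, …, n−1`. With
`c 0 = 1`, `c j = (r⁻ 1/r⁺ 1) ⋯ (r⁻ j/r⁺ j)`, `Γ = Σ_{j=0}^{n−1} c j` and
`c(γ) = Σ_{1 ≤ k ≤ m ≤ n−1} (1/r⁺ k) (r⁻ (k+1)/r⁺ (k+1)) ⋯ (r⁻ m/r⁺ m)`, it holds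
`ψ 1 = ψ 0 + (1/Γ)(ψ n − ψ 0) + c(γ)/Γ`. -/
theorem stmt11 (n : ℕ) (hn : 2 ≤ n) (rm rp : ℕ → ℝ)
    (hrm : ∀ i ∈ Finset.Icc 1 (n - 1), 0 < rm i)
    (hrp : ∀ i ∈ Finset.Icc 1 (n - 1), 0 < rp i)
    (c : ℕ → ℝ) (hc : ∀ j, c j = ∏ l ∈ Finset.Icc 1 j, (rm l / rp l))
    (Γ : ℝ) (hΓ : Γ = ∑ j ∈ Finset.range n, c j)
    (cγ : ℝ) (hcγ : cγ = ∑ m ∈ Finset.Icc 1 (n - 1), ∑ k ∈ Finset.Icc 1 m,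
      (1 / rp k) * ∏ l ∈ Finset.Icc (k + 1) m, (rm l / rp l))
    (ψ : ℕ → ℝ)
    (hψ : ∀ i ∈ Finset.Icc 1 (n - 1),
      rm i * (ψ i - ψ (i - 1)) + rp i * (ψ i - ψ (i + 1)) = 1) :
    ψ 1 = ψ 0 + (1 / Γ) * (ψ n - ψ 0) + cγ / Γ := by
  have key : ∀ m, m ≤ n - 1 → ψ m - ψ (m + 1) = c m * (ψ 0 - ψ 1)
      + ∑ k ∈ Finset.Icc 1 m, (1 / rp k) * ∏ l ∈ Finset.Icc (k + 1) m, (rm l / rp l) := by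
    intro m
    induction m with
    | zero => intro _; simp [hc]
    | succ m ih =>
      intro hm
      have hm' : m ≤ n - 1 := Nat.le_of_succ_le hm
      have hmem : m + 1 ∈ Finset.Icc 1 (n - 1) := by
        simp only [Finset.mem_Icc]; omega
      have hrpm := hrp _ hmem
      have heq := hψ _ hmem
      simp only [Nat.add_sub_cancel] at heq
      have h1' : rp (m + 1) * (ψ (m + 1) - ψ (m + 2)) = rm (m + 1) * (ψ m - ψ (m + 1)) + 1 := by
        linear_combination heq
      have h1 : ψ (m + 1) - ψ (m + 2) = (rm (m + 1) / rp (m + 1)) * (ψ m - ψ (m + 1))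
          + 1 / rp (m + 1) := by
        field_simp
        linear_combination h1'
      have hcsucc : c (m + 1) = c m * (rm (m + 1) / rp (m + 1)) := by
        rw [hc, hc, Finset.prod_Icc_succ_top (by omega : (1 : ℕ) ≤ m + 1)]
      rw [Finset.sum_Icc_succ_top (by omega : (1 : ℕ) ≤ m + 1)]
      have hprod : ∀ k ∈ Finset.Icc 1 m,
          (1 / rp k) * ∏ l ∈ Finset.Icc (k + 1) (m + 1), (rm l / rp l)
          = ((1 / rp k) * ∏ l ∈ Finset.Icc (k + 1) m, (rm l / rp l))
            * (rm (m + 1) / rp (m + 1)) := by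
        intro k hk
        simp only [Finset.mem_Icc] at hk
        rw [Finset.prod_Icc_succ_top (by omega : k + 1 ≤ m + 1)]
        ring
      rw [Finset.sum_congr rfl hprod, ← Finset.sum_mul]
      have hempty : Finset.Icc (m + 1 + 1) (m + 1) = (∅ : Finset ℕ) := by
        apply Finset.Icc_eq_empty; omega
      rw [hempty, Finset.prod_empty, hcsucc]
      linear_combination h1 + (rm (m + 1) / rp (m + 1)) * (ih hm')
  have hΓpos : 0 < Γ := by
    rw [hΓ]
    apply Finset.sum_pos
    · intro j hj
      simp only [Finset.mem_range] at hj
      rw [hc]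
      apply Finset.prod_pos
      intro l hl
      simp only [Finset.mem_Icc] at hl
      have hl' : l ∈ Finset.Icc 1 (n - 1) := by simp only [Finset.mem_Icc]; omega
      exact div_pos (hrm _ hl') (hrp _ hl')
    · exact ⟨0, Finset.mem_range.mpr (by omega)⟩
  have tele : ∑ m ∈ Finset.range n, (ψ m - ψ (m + 1)) = ψ 0 - ψ n :=
    Finset.sum_range_sub' ψ n
  have hsum : ψ 0 - ψ n = Γ * (ψ 0 - ψ 1) + cγ := by
    rw [← tele, hΓ, hcγ]
    rw [Finset.sum_congr rfl (fun m hm => key m (by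
      simp only [Finset.mem_range] at hm; omega))]
    rw [Finset.sum_add_distrib, ← Finset.sum_mul]
    congr 1
    have hr : Finset.range n = insert 0 (Finset.Icc 1 (n - 1)) := by
      ext x
      simp only [Finset.mem_range, Finset.mem_insert, Finset.mem_Icc]
      omega
    rw [hr, Finset.sum_insert (by simp)]
    simp
  have hΓne : Γ ≠ 0 := ne_of_gt hΓpos
  field_simp
  linear_combination hsum
end

section
/- Regeneration identity for the joint first moment: assume E(T_1) < ∞. Then E(S·1{X = 1}) − E(S·1{X = −1}) = [E(T_1·1{ξ_1 = 1}) − E(T_1·1{ξ_1 = −1})]/(p̃ + q̃) + E(T_1·1{ξ_1 = 0})·(p̃ − q̃)/(p̃ + q̃)². -/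
open MeasureTheory ProbabilityTheory

lemma aux_prod_integral {Ω : Type*} [MeasurableSpace Ω] (μ : Measure Ω) [IsProbabilityMeasure μ]
    (Y : ℕ → Ω → ℝ × ℝ) (hY : ∀ i, Measurable (Y i))
    (hindep : iIndepFun Y μ)
    (g : ℕ → ℝ × ℝ → ℝ) (hg : ∀ j, Measurable (g j))
    (s : Finset ℕ) :
    ∫ ω, ∏ j ∈ s, g j (Y j ω) ∂μ = ∏ j ∈ s, ∫ ω, g j (Y j ω) ∂μ := by
  classical
  have hcomp : iIndepFun (fun j => g j ∘ Y j) μ :=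
    hindep.comp g hg
  induction s using Finset.induction_on with
  | empty => simp
  | @insert i s hi ih =>
    have hindepf : IndepFun (∏ j ∈ s, (g j ∘ Y j)) (g i ∘ Y i) μ :=
      hcomp.indepFun_finsetProd_of_notMem (fun j => (hg j).comp (hY j)) hi
    have hprodmeas : AEStronglyMeasurable (∏ j ∈ s, (g j ∘ Y j)) μ := by
      have : AEStronglyMeasurable (fun ω => ∏ j ∈ s, (g j ∘ Y j) ω) μ :=
        (Finset.measurable_prod s (fun j _ => (hg j).comp (hY j))).aestronglyMeasurable
      apply this.congr
      filter_upwards with ω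
      simp [Finset.prod_apply]
    have hmul := hindepf.symm.integral_mul_eq_mul_integral
      ((hg i).comp (hY i)).aestronglyMeasurable hprodmeas
    have e1 : ∫ ω, ∏ j ∈ insert i s, g j (Y j ω) ∂μ
        = integral μ ((g i ∘ Y i) * ∏ j ∈ s, (g j ∘ Y j)) := by
      congr 1; ext ω
      simp [Finset.prod_insert hi, Finset.prod_apply]
    have e2 : integral μ (∏ j ∈ s, (g j ∘ Y j)) = ∫ ω, ∏ j ∈ s, g j (Y j ω) ∂μ := by
      congr 1; ext ω; simp [Finset.prod_apply]
    rw [e1, hmul, e2, ih, Finset.prod_insert hi]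
    rfl

lemma aux_int_ind {Ω : Type*} [MeasurableSpace Ω] (μ : Measure Ω) [IsProbabilityMeasure μ]
    (f : Ω → ℝ) (hf : Measurable f) (v : ℝ) :
    ∫ ω, (if f ω = v then (1:ℝ) else 0) ∂μ = (μ {ω | f ω = v}).toReal := by
  have hs : MeasurableSet {ω | f ω = v} := measurableSet_eq_fun hf measurable_const
  have e : (fun ω => if f ω = v then (1:ℝ) else 0)
      = Set.indicator {ω | f ω = v} (fun _ => (1:ℝ)) := by
    funext ω; simp [Set.indicator_apply, Set.mem_setOf_eq]
  rw [e, integral_indicator hs, setIntegral_const, smul_eq_mul, mul_one]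
  rfl

lemma aux_int_indT {Ω : Type*} [MeasurableSpace Ω] (μ : Measure Ω) [IsProbabilityMeasure μ]
    (f g : Ω → ℝ) (hf : Measurable f) (v : ℝ) :
    ∫ ω, (if f ω = v then g ω else 0) ∂μ = ∫ ω in {ω | f ω = v}, g ω ∂μ := by
  have hs : MeasurableSet {ω | f ω = v} := measurableSet_eq_fun hf measurable_const
  have e : (fun ω => if f ω = v then g ω else 0)
      = Set.indicator {ω | f ω = v} g := by
    funext ω; simp [Set.indicator_apply, Set.mem_setOf_eq]
  rw [e, integral_indicator hs]

lemma aux_main {Ω : Type*} [MeasurableSpace Ω] (μ : Measure Ω) [IsProbabilityMeasure μ]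
    (ξ T : ℕ → Ω → ℝ)
    (hmeas : ∀ i, Measurable (fun ω => (ξ i ω, T i ω)))
    (hindep : iIndepFun (fun i ω => (ξ i ω, T i ω)) μ)
    (hident : ∀ i, IdentDistrib (fun ω => (ξ i ω, T i ω)) (fun ω => (ξ 1 ω, T 1 ω)) μ μ)
    (hTpos : ∀ i ω, 0 < T i ω)
    (K : Ω → ℕ) (X S : Ω → ℝ)
    (hK : ∀ᵐ ω ∂μ, 1 ≤ K ω ∧ ξ (K ω) ω ≠ 0 ∧ ∀ j, 1 ≤ j → j < K ω → ξ j ω = 0)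
    (hX : ∀ᵐ ω ∂μ, X ω = ξ (K ω) ω)
    (hS : ∀ᵐ ω ∂μ, S ω = ∑ i ∈ Finset.Icc 1 (K ω), T i ω)
    (hT1 : Integrable (T 1) μ)
    (ε : ℝ) (hε : ε ≠ 0)
    (hr1 : (μ {ω | ξ 1 ω = 0}).toReal < 1) :
    ∫ ω in {ω | X ω = ε}, S ω ∂μ
      = (∫ ω in {ω | ξ 1 ω = ε}, T 1 ω ∂μ) / (1 - (μ {ω | ξ 1 ω = 0}).toReal)
        + (∫ ω in {ω | ξ 1 ω = 0}, T 1 ω ∂μ) * (μ {ω | ξ 1 ω = ε}).toReal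
          / (1 - (μ {ω | ξ 1 ω = 0}).toReal) ^ 2 := by
  classical
  set A : ℝ := ∫ ω in {ω | ξ 1 ω = ε}, T 1 ω ∂μ with hA
  set B : ℝ := ∫ ω in {ω | ξ 1 ω = 0}, T 1 ω ∂μ with hB
  set W : ℝ := (μ {ω | ξ 1 ω = ε}).toReal with hW
  set r : ℝ := (μ {ω | ξ 1 ω = 0}).toReal with hr
  have hξm : ∀ i, Measurable (ξ i) := fun i => (measurable_fst.comp (hmeas i))
  have hTm : ∀ i, Measurable (T i) := fun i => (measurable_snd.comp (hmeas i))
  have hTi : ∀ i, Integrable (T i) μ :=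
    fun i => ((hident i).comp measurable_snd).integrable_iff.mpr hT1
  have hsv : ∀ (j : ℕ) (u : ℝ), MeasurableSet {ω | ξ j ω = u} :=
    fun j u => measurableSet_eq_fun (hξm j) measurable_const
  -- the value pattern and the events
  set v : ℕ → ℕ → ℝ := fun m j => if j = m + 1 then ε else 0 with hv
  set C : ℕ → Set Ω := fun m => {ω | ∀ j ∈ Finset.Icc 1 (m+1), ξ j ω = v m j} with hC
  have hCmem : ∀ m ω, ω ∈ C m ↔ ∀ j ∈ Finset.Icc 1 (m+1), ξ j ω = v m j := by
    intro m ω; rw [hC]; exact Iff.rfl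
  have hCmeas : ∀ m, MeasurableSet (C m) := by
    intro m
    have e : C m = ⋂ j ∈ Finset.Icc 1 (m+1), {ω | ξ j ω = v m j} := by
      ext ω; simp [hCmem, Set.mem_iInter]
    rw [e]
    exact Finset.measurableSet_biInter _ (fun j _ => hsv j _)
  have hCdisj : ∀ m l, m < l → ∀ ω, ω ∈ C m → ω ∈ C l → False := by
    intro m l hml ω hm hl
    rw [hCmem] at hm hl
    have h1 : ξ (m+1) ω = ε := by
      have := hm (m+1) (by simp)
      rw [show v m (m+1) = ε by rw [hv]; simp] at this
      exact this
    have h2 : ξ (m+1) ω = 0 := by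
      have := hl (m+1) (by simp [Finset.mem_Icc]; omega)
      rw [show v l (m+1) = 0 by rw [hv]; simp only []; rw [if_neg (by omega)]] at this
      exact this
    exact hε (h1.symm.trans h2)
  have hKC : ∀ ω, 1 ≤ K ω → ξ (K ω) ω ≠ 0 → (∀ j, 1 ≤ j → j < K ω → ξ j ω = 0) →
      ∀ m, ω ∈ C m → K ω = m + 1 := by
    intro ω h1 h2 h3 m hm
    rw [hCmem] at hm
    by_contra hne
    rcases lt_or_gt_of_ne hne with hlt | hgt
    · have := hm (K ω) (by simp [Finset.mem_Icc]; omega)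
      rw [show v m (K ω) = 0 by rw [hv]; simp only []; rw [if_neg (by omega)]] at this
      exact h2 this
    · have h4 := h3 (m+1) (by omega) hgt
      have := hm (m+1) (by simp)
      simp only [hv, if_pos rfl] at this
      exact hε (this.symm.trans h4)
  have hGood : ∀ᵐ ω ∂μ, (1 ≤ K ω ∧ ξ (K ω) ω ≠ 0 ∧ (∀ j, 1 ≤ j → j < K ω → ξ j ω = 0))
      ∧ X ω = ξ (K ω) ω ∧ S ω = ∑ i ∈ Finset.Icc 1 (K ω), T i ω := by
    filter_upwards [hK, hX, hS] with ω h1 h2 h3; exact ⟨h1, h2, h3⟩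
  -- set identification
  have hsetae : ({ω | X ω = ε} : Set Ω) =ᵐ[μ] (⋃ m, C m) := by
    rw [Filter.eventuallyEq_set]
    filter_upwards [hGood] with ω hω
    obtain ⟨⟨hk1, hk2, hk3⟩, hx, _⟩ := hω
    constructor
    · intro hXε
      have hXε' : X ω = ε := hXε
      refine Set.mem_iUnion.2 ⟨K ω - 1, ?_⟩
      rw [hCmem]
      intro j hj
      rw [Finset.mem_Icc] at hj
      simp only [hv]
      have hk : K ω - 1 + 1 = K ω := by omega
      by_cases hjk : j = K ω - 1 + 1
      · rw [if_pos hjk, hjk, hk, ← hx]; exact hXε'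
      · rw [if_neg hjk]; exact hk3 j hj.1 (by omega)
    · intro hmem
      obtain ⟨m, hm⟩ := Set.mem_iUnion.1 hmem
      have hKm := hKC ω hk1 hk2 hk3 m hm
      rw [hCmem] at hm
      have := hm (m+1) (by simp)
      simp only [hv, if_pos rfl] at this
      show X ω = ε
      rw [hx, hKm, this]
  -- the summands
  set g : ℕ → Ω → ℝ :=
    fun m => (C m).indicator (fun ω => ∑ i ∈ Finset.Icc 1 (m+1), T i ω) with hg
  have hgmeas : ∀ m, AEStronglyMeasurable (g m) μ := fun m =>
    ((Finset.measurable_sum _ (fun i _ => hTm i)).indicator (hCmeas m)).aestronglyMeasurable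
  have hgint : ∀ m, Integrable (g m) μ := fun m =>
    (integrable_finset_sum _ (fun i _ => hTi i)).indicator (hCmeas m)
  have hgnn : ∀ m ω, 0 ≤ g m ω := by
    intro m ω
    apply Set.indicator_nonneg
    intro x _
    exact Finset.sum_nonneg fun i _ => (hTpos i x).le
  -- Icc decomposition helpers
  have hIccins : ∀ m : ℕ, Finset.Icc 1 (m+1) = insert (m+1) (Finset.Icc 1 m) := by
    intro m; ext j; simp [Finset.mem_Icc, Finset.mem_insert]; omega
  have hnotmem : ∀ m : ℕ, (m+1) ∉ Finset.Icc 1 m := by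
    intro m; simp [Finset.mem_Icc]
  -- single term evaluation
  have hterm : ∀ m i, i ∈ Finset.Icc 1 (m+1) →
      ∫ ω, (C m).indicator (T i) ω ∂μ
        = if i = m+1 then A * r^m else W * B * r^(m-1) := by
    intro m i hi
    set φ : ℕ → ℝ × ℝ → ℝ := fun j z =>
      (if z.1 = v m j then 1 else 0) * (if j = i then z.2 else 1) with hφdef
    have hφm : ∀ j, Measurable (φ j) := by
      intro j
      apply Measurable.mul
      · exact Measurable.ite (measurableSet_eq_fun measurable_fst measurable_const)
          measurable_const measurable_const
      · by_cases h : j = i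
        · simp only [h, if_pos rfl]; exact measurable_snd
        · simp only [h, if_neg h]; exact measurable_const
    have hpt : ∀ ω, (C m).indicator (T i) ω
        = ∏ j ∈ Finset.Icc 1 (m+1), φ j ((fun i ω => (ξ i ω, T i ω)) j ω) := by
      intro ω
      have h1 : ∏ j ∈ Finset.Icc 1 (m+1), φ j ((fun i ω => (ξ i ω, T i ω)) j ω)
          = (if (∀ j ∈ Finset.Icc 1 (m+1), ξ j ω = v m j) then (1:ℝ) else 0) * T i ω := by
        simp only [hφdef]
        rw [Finset.prod_mul_distrib, Finset.prod_boole, Finset.prod_ite_eq', if_pos hi]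
        congr
      rw [h1, Set.indicator_apply]
      by_cases hω : ω ∈ C m
      · rw [if_pos hω, if_pos ((hCmem m ω).1 hω), one_mul]
      · rw [if_neg hω, if_neg (fun hcon => hω ((hCmem m ω).2 hcon)), zero_mul]
    have hint : ∫ ω, (C m).indicator (T i) ω ∂μ
        = ∏ j ∈ Finset.Icc 1 (m+1), ∫ ω, φ j ((fun i ω => (ξ i ω, T i ω)) j ω) ∂μ := by
      rw [show (fun ω => (C m).indicator (T i) ω)
          = fun ω => ∏ j ∈ Finset.Icc 1 (m+1), φ j ((fun i ω => (ξ i ω, T i ω)) j ω)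
        from funext hpt]
      exact aux_prod_integral μ _ hmeas hindep φ hφm _
    have hfac : ∀ j, ∫ ω, φ j ((fun i ω => (ξ i ω, T i ω)) j ω) ∂μ
        = if j = i then (if j = m+1 then A else B) else (if j = m+1 then W else r) := by
      intro j
      have hid : ∫ ω, φ j ((fun i ω => (ξ i ω, T i ω)) j ω) ∂μ
          = ∫ ω, φ j ((fun i ω => (ξ i ω, T i ω)) 1 ω) ∂μ :=
        ((hident j).comp (hφm j)).integral_eq
      rw [hid]
      by_cases h : j = i
      · rw [if_pos h]
        have e : (fun ω => φ j ((fun i ω => (ξ i ω, T i ω)) 1 ω))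
            = fun ω => (if ξ 1 ω = v m j then T 1 ω else 0) := by
          funext ω
          simp only [hφdef, if_pos h]
          by_cases h2 : ξ 1 ω = v m j
          · rw [if_pos h2, if_pos h2, one_mul]
          · rw [if_neg h2, if_neg h2, zero_mul]
        rw [e, aux_int_indT μ (ξ 1) (T 1) (hξm 1) (v m j)]
        by_cases h3 : j = m+1
        · rw [if_pos h3]
          have : v m j = ε := by rw [hv]; simp [h3]
          rw [this, hA]
        · rw [if_neg h3]
          have : v m j = 0 := by rw [hv]; simp [h3]
          rw [this, hB]
      · rw [if_neg h]
        have e : (fun ω => φ j ((fun i ω => (ξ i ω, T i ω)) 1 ω))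
            = fun ω => (if ξ 1 ω = v m j then (1:ℝ) else 0) := by
          funext ω
          simp only [hφdef, if_neg h, mul_one]
        rw [e, aux_int_ind μ (ξ 1) (hξm 1) (v m j)]
        by_cases h3 : j = m+1
        · rw [if_pos h3]
          have : v m j = ε := by rw [hv]; simp [h3]
          rw [this, hW]
        · rw [if_neg h3]
          have : v m j = 0 := by rw [hv]; simp [h3]
          rw [this, hr]
    rw [hint, Finset.prod_congr rfl (fun j _ => hfac j)]
    -- evaluate the product
    rw [hIccins m, Finset.prod_insert (hnotmem m)]
    by_cases h : i = m + 1
    · rw [if_pos h]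
      have hfirst : (if (m+1) = i then (if (m+1) = m+1 then A else B)
          else (if (m+1) = m+1 then W else r)) = A := by
        rw [if_pos h.symm, if_pos rfl]
      have hrest : ∀ j ∈ Finset.Icc 1 m,
          (if j = i then (if j = m+1 then A else B) else (if j = m+1 then W else r)) = r := by
        intro j hj
        rw [Finset.mem_Icc] at hj
        rw [if_neg (by omega), if_neg (by omega)]
      rw [hfirst, Finset.prod_congr rfl hrest, Finset.prod_const, Nat.card_Icc]
      norm_num
    · rw [if_neg h]
      have him : i ∈ Finset.Icc 1 m := by
        rw [Finset.mem_Icc] at hi ⊢; omega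
      have hfirst : (if (m+1) = i then (if (m+1) = m+1 then A else B)
          else (if (m+1) = m+1 then W else r)) = W := by
        rw [if_neg (fun hc => h hc.symm), if_pos rfl]
      rw [hfirst, ← Finset.mul_prod_erase _ _ him]
      have hii : (if i = i then (if i = m+1 then A else B) else (if i = m+1 then W else r)) = B := by
        rw [if_pos rfl, if_neg h]
      have hrest : ∀ j ∈ (Finset.Icc 1 m).erase i,
          (if j = i then (if j = m+1 then A else B) else (if j = m+1 then W else r)) = r := by
        intro j hj
        have hj1 := Finset.ne_of_mem_erase hj
        have hj2 := Finset.mem_of_mem_erase hj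
        rw [Finset.mem_Icc] at hj2
        rw [if_neg hj1, if_neg (by omega)]
      rw [hii, Finset.prod_congr rfl hrest, Finset.prod_const,
        Finset.card_erase_of_mem him, Nat.card_Icc]
      have : m + 1 - 1 - 1 = m - 1 := by omega
      rw [this]
      ring
  -- value of ∫ g m
  have hgval : ∀ m : ℕ, ∫ ω, g m ω ∂μ = A * r^m + (m:ℝ) * (W * B * r^(m-1)) := by
    intro m
    have e : ∀ ω, g m ω = ∑ i ∈ Finset.Icc 1 (m+1), (C m).indicator (T i) ω := by
      intro ω
      by_cases hω : ω ∈ C m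
      · rw [hg]
        simp only [Set.indicator_of_mem hω]
      · rw [hg]
        simp only [Set.indicator_of_notMem hω, Finset.sum_const_zero]
    rw [show (fun ω => g m ω) = fun ω => ∑ i ∈ Finset.Icc 1 (m+1), (C m).indicator (T i) ω
      from funext e]
    rw [integral_finset_sum _ (fun i _ => (hTi i).indicator (hCmeas m))]
    rw [Finset.sum_congr rfl (fun i hi => hterm m i hi)]
    rw [hIccins m, Finset.sum_insert (hnotmem m), if_pos rfl]
    have hrest : ∀ i ∈ Finset.Icc 1 m,
        (if i = m+1 then A * r^m else W * B * r^(m-1)) = W * B * r^(m-1) := by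
      intro i hi
      rw [Finset.mem_Icc] at hi
      rw [if_neg (by omega)]
    rw [Finset.sum_congr rfl hrest, Finset.sum_const, Nat.card_Icc, nsmul_eq_mul]
    have hm1 : m + 1 - 1 = m := by omega
    rw [hm1]
  -- summability and sums
  have hr0 : 0 ≤ r := ENNReal.toReal_nonneg
  have hrn : ‖r‖ < 1 := by rw [Real.norm_eq_abs, abs_of_nonneg hr0]; exact hr1
  have hsub : (1:ℝ) - r ≠ 0 := by intro hc; nlinarith
  have hsum1 : Summable (fun m : ℕ => r^m) := summable_geometric_of_lt_one hr0 hr1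
  have hsumnk : Summable (fun n : ℕ => ((n:ℝ)+1) * r^n) := by
    have h1 : Summable (fun n : ℕ => (n:ℝ) * r^n) := by
      have := summable_pow_mul_geometric_of_norm_lt_one (R := ℝ) 1 hrn
      apply this.congr
      intro n; rw [pow_one]
    apply (h1.add hsum1).congr
    intro n; ring
  have hsum2 : Summable (fun m : ℕ => (m:ℝ) * r^(m-1)) := by
    apply (summable_nat_add_iff 1).mp
    apply hsumnk.congr
    intro n
    have : n + 1 - 1 = n := by omega
    rw [this]
    push_cast
    ring
  have ht1 : ∑' m : ℕ, r^m = 1/(1-r) := by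
    rw [tsum_geometric_of_lt_one hr0 hr1, one_div]
  have ht2 : ∑' m : ℕ, (m:ℝ) * r^(m-1) = 1/(1-r)^2 := by
    rw [hsum2.tsum_eq_zero_add]
    have e : ∀ n : ℕ, ((n+1:ℕ):ℝ) * r^(n+1-1) = (n:ℝ)*r^n + r^n := by
      intro n
      have : n + 1 - 1 = n := by omega
      rw [this]; push_cast; ring
    rw [tsum_congr e]
    have h1 : Summable (fun n : ℕ => (n:ℝ) * r^n) := by
      have := summable_pow_mul_geometric_of_norm_lt_one (R := ℝ) 1 hrn
      apply this.congr
      intro n; rw [pow_one]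
    rw [h1.tsum_add hsum1, tsum_coe_mul_geometric_of_norm_lt_one hrn,
      tsum_geometric_of_lt_one hr0 hr1]
    field_simp
    ring
  have hsumI : Summable (fun m : ℕ => ∫ ω, g m ω ∂μ) := by
    have h0 : Summable (fun m : ℕ => A * r^m + (m:ℝ) * (W * B * r^(m-1))) := by
      apply Summable.add (hsum1.mul_left A)
      apply (hsum2.mul_left (W*B)).congr
      intro n; ring
    exact h0.congr (fun m => (hgval m).symm)
  have htsumI : ∑' m, ∫ ω, g m ω ∂μ = A * (1/(1-r)) + W * B * (1/(1-r)^2) := by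
    calc ∑' m, ∫ ω, g m ω ∂μ
        = ∑' m : ℕ, (A * r^m + (W*B) * ((m:ℝ)*r^(m-1))) :=
          tsum_congr (fun m => by rw [hgval m]; ring)
      _ = A * ∑' m : ℕ, r^m + (W*B) * ∑' m : ℕ, (m:ℝ)*r^(m-1) := by
          rw [(hsum1.mul_left A).tsum_add (hsum2.mul_left (W*B)), tsum_mul_left, tsum_mul_left]
      _ = A * (1/(1-r)) + W * B * (1/(1-r)^2) := by rw [ht1, ht2]
  -- interchange of sum and integral
  have hFint : ∫ ω, (∑' m, g m ω) ∂μ = ∑' m, ∫ ω, g m ω ∂μ := by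
    apply integral_tsum hgmeas
    have e : ∀ m : ℕ, ∫⁻ ω, ‖g m ω‖ₑ ∂μ = ENNReal.ofReal (∫ ω, g m ω ∂μ) := by
      intro m
      rw [ofReal_integral_eq_lintegral_ofReal (hgint m) (Filter.Eventually.of_forall (hgnn m))]
      apply lintegral_congr
      intro ω
      exact Real.enorm_eq_ofReal (hgnn m ω)
    rw [tsum_congr e, ← ENNReal.ofReal_tsum_of_nonneg
      (fun m => integral_nonneg (hgnn m)) hsumI]
    exact ENNReal.ofReal_ne_top
  -- a.e. identification of S with the series
  have hSF : ∀ᵐ ω ∂μ, ω ∈ (⋃ m, C m) → S ω = ∑' m, g m ω := by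
    filter_upwards [hGood] with ω hω hmem
    obtain ⟨⟨hk1, hk2, hk3⟩, hx, hs⟩ := hω
    obtain ⟨m, hm⟩ := Set.mem_iUnion.1 hmem
    have hKm := hKC ω hk1 hk2 hk3 m hm
    have huniq : ∀ l, l ≠ m → g l ω = 0 := by
      intro l hl
      apply Set.indicator_of_notMem
      intro hml
      rcases lt_or_gt_of_ne hl with hlt | hgt
      · exact hCdisj l m hlt ω hml hm
      · exact hCdisj m l hgt ω hm hml
    rw [tsum_eq_single m huniq]
    rw [hg]
    simp only [Set.indicator_of_mem hm]
    rw [hs, hKm]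
  have hF0 : ∀ ω, ω ∉ (⋃ m, C m) → (∑' m, g m ω) = 0 := by
    intro ω hω
    have e : ∀ m, g m ω = 0 :=
      fun m => Set.indicator_of_notMem (fun h => hω (Set.mem_iUnion.2 ⟨m, h⟩)) _
    simp [e]
  have hmeasU : MeasurableSet (⋃ m, C m) := MeasurableSet.iUnion hCmeas
  calc ∫ ω in {ω | X ω = ε}, S ω ∂μ
      = ∫ ω in (⋃ m, C m), S ω ∂μ := by rw [Measure.restrict_congr_set hsetae]
    _ = ∫ ω in (⋃ m, C m), (∑' m, g m ω) ∂μ := setIntegral_congr_ae hmeasU hSF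
    _ = ∫ ω, (∑' m, g m ω) ∂μ := by
        rw [← integral_indicator hmeasU]
        congr 1
        funext ω
        by_cases hω : ω ∈ ⋃ m, C m
        · rw [Set.indicator_of_mem hω]
        · rw [Set.indicator_of_notMem hω, hF0 ω hω]
    _ = ∑' m, ∫ ω, g m ω ∂μ := hFint
    _ = A * (1/(1-r)) + W * B * (1/(1-r)^2) := htsumI
    _ = A / (1-r) + B * W / (1-r)^2 := by ring

/-- **Regeneration identity for the joint first moment.**
Let `((ξ i, T i))_{i≥1}` be i.i.d. with `ξ i ∈ {−1,0,1}` and `T i ∈ (0,∞)`. With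
`p = P(ξ 1 = 1)`, `q = P(ξ 1 = −1)`, `p + q > 0`, `K = min {k ≥ 1 : ξ k ≠ 0}`
(finite a.s.), `S = T 1 + ⋯ + T K` and `X = ξ K`, if `E(T 1) < ∞` then
`E(S 1_{X=1}) − E(S 1_{X=−1})
  = [E(T 1 · 1_{ξ 1 = 1}) − E(T 1 · 1_{ξ 1 = −1})]/(p+q)
    + E(T 1 · 1_{ξ 1 = 0}) (p − q)/(p+q)²`. -/
theorem stmt13
    {Ω : Type*} [MeasurableSpace Ω] (μ : Measure Ω) [IsProbabilityMeasure μ]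
    (ξ T : ℕ → Ω → ℝ)
    (hmeas : ∀ i, Measurable (fun ω => (ξ i ω, T i ω)))
    (hindep : iIndepFun (fun i ω => (ξ i ω, T i ω)) μ)
    (hident : ∀ i, IdentDistrib (fun ω => (ξ i ω, T i ω)) (fun ω => (ξ 1 ω, T 1 ω)) μ μ)
    (hξval : ∀ i ω, ξ i ω = -1 ∨ ξ i ω = 0 ∨ ξ i ω = 1)
    (hTpos : ∀ i ω, 0 < T i ω)
    (p q : ℝ)
    (hp : p = (μ {ω | ξ 1 ω = 1}).toReal)
    (hq : q = (μ {ω | ξ 1 ω = -1}).toReal)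
    (hpq : 0 < p + q)
    (K : Ω → ℕ) (X S : Ω → ℝ)
    (hK : ∀ᵐ ω ∂μ, 1 ≤ K ω ∧ ξ (K ω) ω ≠ 0 ∧ ∀ j, 1 ≤ j → j < K ω → ξ j ω = 0)
    (hX : ∀ᵐ ω ∂μ, X ω = ξ (K ω) ω)
    (hS : ∀ᵐ ω ∂μ, S ω = ∑ i ∈ Finset.Icc 1 (K ω), T i ω)
    (hT1 : Integrable (T 1) μ) :
    (∫ ω in {ω | X ω = 1}, S ω ∂μ) - (∫ ω in {ω | X ω = -1}, S ω ∂μ)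
      = ((∫ ω in {ω | ξ 1 ω = 1}, T 1 ω ∂μ) - (∫ ω in {ω | ξ 1 ω = -1}, T 1 ω ∂μ))
          / (p + q)
        + (∫ ω in {ω | ξ 1 ω = 0}, T 1 ω ∂μ) * (p - q) / (p + q) ^ 2 := by
  have hξm : Measurable (ξ 1) := measurable_fst.comp (hmeas 1)
  have hsv : ∀ u : ℝ, MeasurableSet {ω | ξ 1 ω = u} :=
    fun u => measurableSet_eq_fun hξm measurable_const
  have hdisj1 : Disjoint {ω | ξ 1 ω = 1} {ω | ξ 1 ω = -1} := by
    rw [Set.disjoint_left]; intro ω h1 h2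
    simp only [Set.mem_setOf_eq] at h1 h2
    rw [h1] at h2; norm_num at h2
  have hdisj2 : Disjoint ({ω | ξ 1 ω = 1} ∪ {ω | ξ 1 ω = -1}) {ω | ξ 1 ω = 0} := by
    rw [Set.disjoint_left]; intro ω h1 h2
    simp only [Set.mem_union, Set.mem_setOf_eq] at h1 h2
    rcases h1 with h1 | h1 <;> rw [h1] at h2 <;> norm_num at h2
  have hcover : ({ω | ξ 1 ω = 1} ∪ {ω | ξ 1 ω = -1}) ∪ {ω | ξ 1 ω = 0} = Set.univ := by
    ext ω
    simp only [Set.mem_union, Set.mem_setOf_eq, Set.mem_univ, iff_true]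
    rcases hξval 1 ω with h | h | h
    · left; right; exact h
    · right; exact h
    · left; left; exact h
  have hpart : μ {ω | ξ 1 ω = 1} + μ {ω | ξ 1 ω = -1} + μ {ω | ξ 1 ω = 0} = 1 := by
    have e1 : μ ({ω | ξ 1 ω = 1} ∪ {ω | ξ 1 ω = -1})
        = μ {ω | ξ 1 ω = 1} + μ {ω | ξ 1 ω = -1} := measure_union hdisj1 (hsv (-1))
    have e2 : μ (({ω | ξ 1 ω = 1} ∪ {ω | ξ 1 ω = -1}) ∪ {ω | ξ 1 ω = 0})
        = μ ({ω | ξ 1 ω = 1} ∪ {ω | ξ 1 ω = -1}) + μ {ω | ξ 1 ω = 0} :=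
      measure_union hdisj2 (hsv 0)
    rw [← e1, ← e2, hcover, measure_univ]
  have hsum : p + q + (μ {ω | ξ 1 ω = 0}).toReal = 1 := by
    rw [hp, hq,
      ← ENNReal.toReal_add (measure_ne_top μ _) (measure_ne_top μ _),
      ← ENNReal.toReal_add (ENNReal.add_ne_top.2 ⟨measure_ne_top μ _, measure_ne_top μ _⟩)
        (measure_ne_top μ _), hpart]
    simp
  have hr1 : (μ {ω | ξ 1 ω = 0}).toReal < 1 := by linarith
  have h1r : 1 - (μ {ω | ξ 1 ω = 0}).toReal = p + q := by linarith
  have hE1 := aux_main μ ξ T hmeas hindep hident hTpos K X S hK hX hS hT1 1 (by norm_num) hr1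
  have hE2 := aux_main μ ξ T hmeas hindep hident hTpos K X S hK hX hS hT1 (-1) (by norm_num) hr1
  rw [hE1, hE2, h1r, ← hp, ← hq]
  have hne : p + q ≠ 0 := ne_of_gt hpq
  field_simp
  ring
end

section
/- Regeneration identity for the second moment: assume E(T_1²) < ∞. Then E(S²) = E(T_1²)/(p̃ + q̃) + 2 E(T_1·1{ξ_1 = 0}) E(T_1) / (p̃ + q̃)². -/
open MeasureTheory ProbabilityTheory

namespace Stmt14Aux

noncomputable def ind0 : ℝ × ℝ → ENNReal := fun p => if p.1 = 0 then 1 else 0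
noncomputable def gT : ℝ × ℝ → ENNReal := fun p => ENNReal.ofReal p.2
noncomputable def gT2 : ℝ × ℝ → ENNReal := fun p => ENNReal.ofReal p.2 ^ 2
noncomputable def gT0 : ℝ × ℝ → ENNReal := fun p => if p.1 = 0 then ENNReal.ofReal p.2 else 0

lemma meas_set0 : MeasurableSet {p : ℝ × ℝ | p.1 = 0} :=
  (measurableSet_singleton (0 : ℝ)).preimage measurable_fst

lemma ind0_meas : Measurable ind0 :=
  Measurable.ite meas_set0 measurable_const measurable_const

lemma gT_meas : Measurable gT := ENNReal.measurable_ofReal.comp measurable_snd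

lemma gT2_meas : Measurable gT2 := gT_meas.pow_const 2

lemma gT0_meas : Measurable gT0 := Measurable.ite meas_set0 gT_meas measurable_const

lemma ind0_mul_gT (p : ℝ × ℝ) : ind0 p * gT p = gT0 p := by
  simp only [ind0, gT, gT0]
  split <;> simp

lemma gT0_le_gT (p : ℝ × ℝ) : gT0 p ≤ gT p := by
  simp only [gT0, gT]; split <;> simp

lemma gT_le_one_add_gT2 (p : ℝ × ℝ) : gT p ≤ 1 + gT2 p := by
  simp only [gT, gT2]
  rcases le_total (ENNReal.ofReal p.2) 1 with h | h
  · exact h.trans le_self_add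
  · calc ENNReal.ofReal p.2 = ENNReal.ofReal p.2 * 1 := (mul_one _).symm
      _ ≤ ENNReal.ofReal p.2 * ENNReal.ofReal p.2 := by gcongr
      _ = ENNReal.ofReal p.2 ^ 2 := (sq _).symm
      _ ≤ 1 + ENNReal.ofReal p.2 ^ 2 := le_add_self

lemma Icc_succ (k : ℕ) : Finset.Icc 1 (k + 1) = insert (k + 1) (Finset.Icc 1 k) := by
  ext x; simp only [Finset.mem_Icc, Finset.mem_insert]; omega

lemma succ_not_mem_Icc (k : ℕ) : (k + 1) ∉ Finset.Icc 1 k := by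
  simp [Finset.mem_Icc]

lemma sum_Icc_one {M : Type*} [AddCommMonoid M] (v : ℕ → M) (k : ℕ) :
    ∑ j ∈ Finset.Icc 1 k, v j = ∑ n ∈ Finset.range k, v (n + 1) := by
  induction k with
  | zero => simp
  | succ k ih =>
    rw [Icc_succ, Finset.sum_insert (succ_not_mem_Icc k), ih, Finset.sum_range_succ]
    exact add_comm _ _

lemma sq_sum_Icc {M : Type*} [CommSemiring M] (u : ℕ → M) (k : ℕ) :
    (∑ j ∈ Finset.Icc 1 k, u j) ^ 2
      = ∑ j ∈ Finset.Icc 1 k, (u j ^ 2 + 2 * ∑ i ∈ Finset.Icc 1 (j - 1), u i * u j) := by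
  induction k with
  | zero => simp
  | succ k ih =>
    rw [Icc_succ, Finset.sum_insert (succ_not_mem_Icc k), Finset.sum_insert (succ_not_mem_Icc k),
      add_sq, ih]
    have h2 : (2 : M) * u (k + 1) * ∑ j ∈ Finset.Icc 1 k, u j
        = 2 * ∑ i ∈ Finset.Icc 1 k, u i * u (k + 1) := by
      rw [Finset.mul_sum, Finset.mul_sum]
      exact Finset.sum_congr rfl fun i _ => by ring
    rw [h2]
    simp only [Nat.add_sub_cancel]

lemma lintegral_prod_comp {Ω : Type*} [MeasurableSpace Ω] (μ : Measure Ω) [IsProbabilityMeasure μ]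
    (f : ℕ → Ω → ℝ × ℝ) (hf : ∀ i, Measurable (f i))
    (hindep : iIndepFun f μ)
    (g : ℕ → ℝ × ℝ → ENNReal) (hg : ∀ m, Measurable (g m)) (s : Finset ℕ) :
    ∫⁻ ω, ∏ m ∈ s, g m (f m ω) ∂μ = ∏ m ∈ s, ∫⁻ ω, g m (f m ω) ∂μ := by
  classical
  induction s using Finset.induction_on with
  | empty => simp
  | @insert a s ha ih =>
    have hF : ∀ m, Measurable (g m ∘ f m) := fun m => (hg m).comp (hf m)
    have hiF : iIndepFun (fun i => g i ∘ f i) μ :=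
      hindep.comp g hg
    have hprodeq : (∏ j ∈ s, (g j ∘ f j)) = fun ω => ∏ m ∈ s, g m (f m ω) := by
      funext ω; simp [Finset.prod_apply]
    have hid : IndepFun (fun ω => g a (f a ω)) (fun ω => ∏ m ∈ s, g m (f m ω)) μ := by
      have h2 := hiF.indepFun_finsetProd_of_notMem hF ha
      rw [hprodeq] at h2
      exact h2.symm
    have hmul : Measurable fun ω => ∏ m ∈ s, g m (f m ω) :=
      Finset.measurable_prod s fun i _ => hF i
    calc ∫⁻ ω, ∏ m ∈ insert a s, g m (f m ω) ∂μ
        = ∫⁻ ω, ((fun ω => g a (f a ω)) * fun ω => ∏ m ∈ s, g m (f m ω)) ω ∂μ := by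
          apply lintegral_congr; intro ω
          simp [Finset.prod_insert ha]
      _ = (∫⁻ ω, g a (f a ω) ∂μ) * ∫⁻ ω, ∏ m ∈ s, g m (f m ω) ∂μ :=
          lintegral_mul_eq_lintegral_mul_lintegral_of_indepFun (hF a) hmul hid
      _ = _ := by rw [ih, Finset.prod_insert ha]

end Stmt14Aux

/-- **Regeneration identity for the second moment.**
Let `((ξ i, T i))_{i≥1}` be i.i.d. with `ξ i ∈ {−1,0,1}` and `T i ∈ (0,∞)`. With
`p = P(ξ 1 = 1)`, `q = P(ξ 1 = −1)`, `p + q > 0`, `K = min {k ≥ 1 : ξ k ≠ 0}`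
(finite a.s.) and `S = T 1 + ⋯ + T K`, if `E(T 1 ^ 2) < ∞` then
`E(S²) = E(T 1 ²)/(p+q) + 2 E(T 1 · 1_{ξ 1 = 0}) E(T 1)/(p+q)²`. -/
theorem stmt14
    {Ω : Type*} [MeasurableSpace Ω] (μ : Measure Ω) [IsProbabilityMeasure μ]
    (ξ T : ℕ → Ω → ℝ)
    (hmeas : ∀ i, Measurable (fun ω => (ξ i ω, T i ω)))
    (hindep : iIndepFun (fun i ω => (ξ i ω, T i ω)) μ)
    (hident : ∀ i, IdentDistrib (fun ω => (ξ i ω, T i ω)) (fun ω => (ξ 1 ω, T 1 ω)) μ μ)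
    (hξval : ∀ i ω, ξ i ω = -1 ∨ ξ i ω = 0 ∨ ξ i ω = 1)
    (hTpos : ∀ i ω, 0 < T i ω)
    (p q : ℝ)
    (hp : p = (μ {ω | ξ 1 ω = 1}).toReal)
    (hq : q = (μ {ω | ξ 1 ω = -1}).toReal)
    (hpq : 0 < p + q)
    (K : Ω → ℕ) (X S : Ω → ℝ)
    (hK : ∀ᵐ ω ∂μ, 1 ≤ K ω ∧ ξ (K ω) ω ≠ 0 ∧ ∀ j, 1 ≤ j → j < K ω → ξ j ω = 0)
    (hX : ∀ᵐ ω ∂μ, X ω = ξ (K ω) ω)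
    (hS : ∀ᵐ ω ∂μ, S ω = ∑ i ∈ Finset.Icc 1 (K ω), T i ω)
    (hT2 : Integrable (fun ω => (T 1 ω) ^ 2) μ) :
    ∫ ω, (S ω) ^ 2 ∂μ
      = (∫ ω, (T 1 ω) ^ 2 ∂μ) / (p + q)
        + 2 * (∫ ω in {ω | ξ 1 ω = 0}, T 1 ω ∂μ) * (∫ ω, T 1 ω ∂μ) / (p + q) ^ 2 := by
  classical
  have hξm : ∀ i, Measurable (ξ i) := fun i => measurable_fst.comp (hmeas i)
  have hTm : ∀ i, Measurable (T i) := fun i => measurable_snd.comp (hmeas i)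
  -- constants
  obtain ⟨r, hr_def⟩ : ∃ r, r = ∫⁻ ω, Stmt14Aux.ind0 (ξ 1 ω, T 1 ω) ∂μ := ⟨_, rfl⟩
  obtain ⟨c1, hc1_def⟩ : ∃ c1, c1 = ∫⁻ ω, Stmt14Aux.gT (ξ 1 ω, T 1 ω) ∂μ := ⟨_, rfl⟩
  obtain ⟨c2, hc2_def⟩ : ∃ c2, c2 = ∫⁻ ω, Stmt14Aux.gT2 (ξ 1 ω, T 1 ω) ∂μ := ⟨_, rfl⟩
  obtain ⟨aa, haa_def⟩ : ∃ aa, aa = ∫⁻ ω, Stmt14Aux.gT0 (ξ 1 ω, T 1 ω) ∂μ := ⟨_, rfl⟩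
  -- coordinate identity
  have hco : ∀ (g : ℝ × ℝ → ENNReal), Measurable g → ∀ m : ℕ,
      ∫⁻ ω, g (ξ m ω, T m ω) ∂μ = ∫⁻ ω, g (ξ 1 ω, T 1 ω) ∂μ := by
    intro g hg m
    rw [← lintegral_map hg (hmeas m), (hident m).map_eq, lintegral_map hg (hmeas 1)]
  -- product identity
  have hprod : ∀ (g : ℕ → ℝ × ℝ → ENNReal), (∀ m, Measurable (g m)) → ∀ s : Finset ℕ,
      ∫⁻ ω, ∏ m ∈ s, g m (ξ m ω, T m ω) ∂μ = ∏ m ∈ s, ∫⁻ ω, g m (ξ 1 ω, T 1 ω) ∂μ := by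
    intro g hg s
    rw [Stmt14Aux.lintegral_prod_comp μ _ hmeas hindep g hg s]
    exact Finset.prod_congr rfl fun m _ => hco (g m) (hg m) m
  -- the summands
  obtain ⟨W, hW_def⟩ : ∃ W : ℕ → Ω → ENNReal, ∀ j ω, W j ω =
      (∏ m ∈ Finset.Icc 1 (j - 1), Stmt14Aux.ind0 (ξ m ω, T m ω)) *
        (Stmt14Aux.gT2 (ξ j ω, T j ω) +
          2 * ∑ i ∈ Finset.Icc 1 (j - 1),
            Stmt14Aux.gT (ξ i ω, T i ω) * Stmt14Aux.gT (ξ j ω, T j ω)) :=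
    ⟨_, fun _ _ => rfl⟩
  have hWmeas : ∀ j, Measurable (W j) := by
    intro j
    have : W j = fun ω =>
        (∏ m ∈ Finset.Icc 1 (j - 1), Stmt14Aux.ind0 (ξ m ω, T m ω)) *
          (Stmt14Aux.gT2 (ξ j ω, T j ω) +
            2 * ∑ i ∈ Finset.Icc 1 (j - 1),
              Stmt14Aux.gT (ξ i ω, T i ω) * Stmt14Aux.gT (ξ j ω, T j ω)) :=
      funext fun ω => hW_def j ω
    rw [this]
    refine Measurable.mul ?_ (Measurable.fun_add ?_ (Measurable.const_mul ?_ 2))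
    · exact Finset.measurable_prod _ fun m _ => Stmt14Aux.ind0_meas.comp (hmeas m)
    · exact Stmt14Aux.gT2_meas.comp (hmeas j)
    · exact Finset.measurable_sum _ fun i _ =>
        (Stmt14Aux.gT_meas.comp (hmeas i)).mul (Stmt14Aux.gT_meas.comp (hmeas j))
  -- Step 1: a.e. pointwise identity
  have hae : ∀ᵐ ω ∂μ, ENNReal.ofReal (S ω ^ 2) = ∑' n, W (n + 1) ω := by
    filter_upwards [hK, hS] with ω hKω hSω
    obtain ⟨hk1, hkne, hk0⟩ := hKω
    have hzero : ∀ n ∉ Finset.range (K ω), W (n + 1) ω = 0 := by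
      intro n hn
      rw [Finset.mem_range, not_lt] at hn
      rw [hW_def]
      have hz : ∏ m ∈ Finset.Icc 1 ((n + 1) - 1), Stmt14Aux.ind0 (ξ m ω, T m ω) = 0 := by
        apply Finset.prod_eq_zero (i := K ω)
        · simp only [Nat.add_sub_cancel, Finset.mem_Icc]
          exact ⟨hk1, hn⟩
        · simp only [Stmt14Aux.ind0, if_neg hkne]
      rw [hz, zero_mul]
    rw [tsum_eq_sum hzero]
    have h1 : ∑ n ∈ Finset.range (K ω), W (n + 1) ω = ∑ j ∈ Finset.Icc 1 (K ω), W j ω :=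
      (Stmt14Aux.sum_Icc_one (fun j => W j ω) (K ω)).symm
    rw [h1]
    have h2 : ∀ j ∈ Finset.Icc 1 (K ω), W j ω =
        Stmt14Aux.gT (ξ j ω, T j ω) ^ 2 +
          2 * ∑ i ∈ Finset.Icc 1 (j - 1),
            Stmt14Aux.gT (ξ i ω, T i ω) * Stmt14Aux.gT (ξ j ω, T j ω) := by
      intro j hj
      rw [Finset.mem_Icc] at hj
      rw [hW_def]
      have hχ : ∏ m ∈ Finset.Icc 1 (j - 1), Stmt14Aux.ind0 (ξ m ω, T m ω) = 1 := by
        apply Finset.prod_eq_one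
        intro m hm
        rw [Finset.mem_Icc] at hm
        have h0 : ξ m ω = 0 := hk0 m hm.1 (by omega)
        simp [Stmt14Aux.ind0, h0]
      rw [hχ, one_mul]
      rfl
    have h3 := Stmt14Aux.sq_sum_Icc (fun i => Stmt14Aux.gT (ξ i ω, T i ω)) (K ω)
    rw [Finset.sum_congr rfl h2, ← h3]
    rw [hSω, ENNReal.ofReal_pow (Finset.sum_nonneg fun i _ => (hTpos i ω).le),
      ENNReal.ofReal_sum_of_nonneg fun i _ => (hTpos i ω).le]
    rfl
  -- Step 2: measurability / integral to lintegral
  have hGmeas : Measurable fun ω => ∑' n, W (n + 1) ω :=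
    Measurable.ennreal_tsum fun n => hWmeas (n + 1)
  have hS2ae : (fun ω => S ω ^ 2) =ᵐ[μ] fun ω => (∑' n, W (n + 1) ω).toReal := by
    filter_upwards [hae] with ω hω
    rw [← hω, ENNReal.toReal_ofReal (sq_nonneg _)]
  have hS2sm : AEStronglyMeasurable (fun ω => S ω ^ 2) μ :=
    hGmeas.ennreal_toReal.aestronglyMeasurable.congr hS2ae.symm
  have hint : ∫ ω, S ω ^ 2 ∂μ = (∫⁻ ω, ENNReal.ofReal (S ω ^ 2) ∂μ).toReal :=
    integral_eq_lintegral_of_nonneg_ae (Filter.Eventually.of_forall fun ω => sq_nonneg _) hS2sm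
  have hlint : ∫⁻ ω, ENNReal.ofReal (S ω ^ 2) ∂μ = ∑' n, ∫⁻ ω, W (n + 1) ω ∂μ := by
    rw [lintegral_congr_ae hae]
    exact lintegral_tsum fun n => (hWmeas (n + 1)).aemeasurable
  -- Step 3: per-n integral
  have hWint : ∀ n : ℕ, ∫⁻ ω, W (n + 1) ω ∂μ
      = c2 * r ^ n + 2 * (n * (aa * (c1 * r ^ (n - 1)))) := by
    intro n
    have hins : Finset.Icc 1 (n + 1) = insert (n + 1) (Finset.Icc 1 n) := Stmt14Aux.Icc_succ n
    have hnm : (n + 1) ∉ Finset.Icc 1 n := Stmt14Aux.succ_not_mem_Icc n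
    have hsplit : ∀ ω, W (n + 1) ω =
        (∏ m ∈ Finset.Icc 1 n, Stmt14Aux.ind0 (ξ m ω, T m ω)) *
            Stmt14Aux.gT2 (ξ (n+1) ω, T (n+1) ω)
        + 2 * ∑ i ∈ Finset.Icc 1 n,
            (∏ m ∈ Finset.Icc 1 n, Stmt14Aux.ind0 (ξ m ω, T m ω)) *
              (Stmt14Aux.gT (ξ i ω, T i ω) * Stmt14Aux.gT (ξ (n+1) ω, T (n+1) ω)) := by
      intro ω
      rw [hW_def]
      simp only [Nat.add_sub_cancel]
      rw [mul_add, mul_left_comm, Finset.mul_sum]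
    have hχmeas : Measurable fun ω => ∏ m ∈ Finset.Icc 1 n, Stmt14Aux.ind0 (ξ m ω, T m ω) :=
      Finset.measurable_prod _ fun m _ => Stmt14Aux.ind0_meas.comp (hmeas m)
    have hA : ∫⁻ ω, (∏ m ∈ Finset.Icc 1 n, Stmt14Aux.ind0 (ξ m ω, T m ω)) *
        Stmt14Aux.gT2 (ξ (n+1) ω, T (n+1) ω) ∂μ = c2 * r ^ n := by
      obtain ⟨g, hg_def⟩ : ∃ g : ℕ → ℝ × ℝ → ENNReal,
          ∀ m, g m = if m = n + 1 then Stmt14Aux.gT2 else Stmt14Aux.ind0 := ⟨_, fun _ => rfl⟩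
      have hgm : ∀ m, Measurable (g m) := by
        intro m; rw [hg_def]
        split
        · exact Stmt14Aux.gT2_meas
        · exact Stmt14Aux.ind0_meas
      have hptw : ∀ ω, (∏ m ∈ Finset.Icc 1 n, Stmt14Aux.ind0 (ξ m ω, T m ω)) *
          Stmt14Aux.gT2 (ξ (n+1) ω, T (n+1) ω)
          = ∏ m ∈ Finset.Icc 1 (n+1), g m (ξ m ω, T m ω) := by
        intro ω
        rw [hins, Finset.prod_insert hnm, hg_def (n+1), if_pos rfl, mul_comm]
        congr 1
        refine Finset.prod_congr rfl fun m hm => ?_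
        rw [Finset.mem_Icc] at hm
        rw [hg_def m, if_neg (by omega)]
      rw [lintegral_congr hptw, hprod g hgm, hins, Finset.prod_insert hnm]
      have e1 : ∫⁻ ω, g (n+1) (ξ 1 ω, T 1 ω) ∂μ = c2 := by
        rw [hg_def (n+1), if_pos rfl, hc2_def]
      have e2 : ∏ m ∈ Finset.Icc 1 n, ∫⁻ ω, g m (ξ 1 ω, T 1 ω) ∂μ = r ^ n := by
        have h4 : ∀ m ∈ Finset.Icc 1 n, ∫⁻ ω, g m (ξ 1 ω, T 1 ω) ∂μ = r := by
          intro m hm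
          rw [Finset.mem_Icc] at hm
          rw [hg_def m, if_neg (by omega), hr_def]
        rw [Finset.prod_congr rfl h4, Finset.prod_const, Nat.card_Icc]
        norm_num
      rw [e1, e2]
    have hB : ∀ i ∈ Finset.Icc 1 n,
        ∫⁻ ω, (∏ m ∈ Finset.Icc 1 n, Stmt14Aux.ind0 (ξ m ω, T m ω)) *
          (Stmt14Aux.gT (ξ i ω, T i ω) * Stmt14Aux.gT (ξ (n+1) ω, T (n+1) ω)) ∂μ
        = aa * (c1 * r ^ (n - 1)) := by
      intro i hi
      have hi' := Finset.mem_Icc.1 hi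
      obtain ⟨g, hg_def⟩ : ∃ g : ℕ → ℝ × ℝ → ENNReal, ∀ m, g m =
          if m = n + 1 then Stmt14Aux.gT else
            if m = i then Stmt14Aux.gT0 else Stmt14Aux.ind0 := ⟨_, fun _ => rfl⟩
      have hgm : ∀ m, Measurable (g m) := by
        intro m; rw [hg_def]
        split
        · exact Stmt14Aux.gT_meas
        · split
          · exact Stmt14Aux.gT0_meas
          · exact Stmt14Aux.ind0_meas
      have hptw : ∀ ω, (∏ m ∈ Finset.Icc 1 n, Stmt14Aux.ind0 (ξ m ω, T m ω)) *
          (Stmt14Aux.gT (ξ i ω, T i ω) * Stmt14Aux.gT (ξ (n+1) ω, T (n+1) ω))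
          = ∏ m ∈ Finset.Icc 1 (n+1), g m (ξ m ω, T m ω) := by
        intro ω
        rw [hins, Finset.prod_insert hnm, hg_def (n+1), if_pos rfl]
        rw [← Finset.mul_prod_erase (Finset.Icc 1 n)
          (fun m => g m (ξ m ω, T m ω)) hi]
        rw [hg_def i, if_neg (by omega), if_pos rfl]
        rw [← Finset.mul_prod_erase (Finset.Icc 1 n)
          (fun m => Stmt14Aux.ind0 (ξ m ω, T m ω)) hi]
        have herase : ∏ m ∈ (Finset.Icc 1 n).erase i, g m (ξ m ω, T m ω)
            = ∏ m ∈ (Finset.Icc 1 n).erase i, Stmt14Aux.ind0 (ξ m ω, T m ω) := by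
          refine Finset.prod_congr rfl fun m hm => ?_
          obtain ⟨hmi, hmIcc⟩ := Finset.mem_erase.1 hm
          rw [Finset.mem_Icc] at hmIcc
          rw [hg_def m, if_neg (by omega), if_neg hmi]
        rw [herase, ← Stmt14Aux.ind0_mul_gT (ξ i ω, T i ω)]
        ring
      rw [lintegral_congr hptw, hprod g hgm, hins, Finset.prod_insert hnm]
      rw [← Finset.mul_prod_erase (Finset.Icc 1 n)
        (fun m => ∫⁻ ω, g m (ξ 1 ω, T 1 ω) ∂μ) hi]
      have e1 : ∫⁻ ω, g (n+1) (ξ 1 ω, T 1 ω) ∂μ = c1 := by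
        rw [hg_def (n+1), if_pos rfl, hc1_def]
      have e2 : ∫⁻ ω, g i (ξ 1 ω, T 1 ω) ∂μ = aa := by
        rw [hg_def i, if_neg (by omega), if_pos rfl, haa_def]
      have e3 : ∏ m ∈ (Finset.Icc 1 n).erase i, ∫⁻ ω, g m (ξ 1 ω, T 1 ω) ∂μ
          = r ^ (n - 1) := by
        have h4 : ∀ m ∈ (Finset.Icc 1 n).erase i, ∫⁻ ω, g m (ξ 1 ω, T 1 ω) ∂μ = r := by
          intro m hm
          obtain ⟨hmi, hmIcc⟩ := Finset.mem_erase.1 hm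
          rw [Finset.mem_Icc] at hmIcc
          rw [hg_def m, if_neg (by omega), if_neg hmi, hr_def]
        rw [Finset.prod_congr rfl h4, Finset.prod_const, Finset.card_erase_of_mem hi,
          Nat.card_Icc]
        norm_num
      rw [e1, e2, e3]
      ring
    have hAmeas : Measurable fun ω => (∏ m ∈ Finset.Icc 1 n, Stmt14Aux.ind0 (ξ m ω, T m ω)) *
        Stmt14Aux.gT2 (ξ (n+1) ω, T (n+1) ω) :=
      hχmeas.mul (Stmt14Aux.gT2_meas.comp (hmeas (n+1)))
    have hBmeas : ∀ i : ℕ, Measurable fun ω =>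
        (∏ m ∈ Finset.Icc 1 n, Stmt14Aux.ind0 (ξ m ω, T m ω)) *
          (Stmt14Aux.gT (ξ i ω, T i ω) * Stmt14Aux.gT (ξ (n+1) ω, T (n+1) ω)) := fun i =>
      hχmeas.mul ((Stmt14Aux.gT_meas.comp (hmeas i)).mul (Stmt14Aux.gT_meas.comp (hmeas (n+1))))
    have hSmeas : Measurable fun ω => ∑ i ∈ Finset.Icc 1 n,
        (∏ m ∈ Finset.Icc 1 n, Stmt14Aux.ind0 (ξ m ω, T m ω)) *
          (Stmt14Aux.gT (ξ i ω, T i ω) * Stmt14Aux.gT (ξ (n+1) ω, T (n+1) ω)) :=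
      Finset.measurable_sum _ fun i _ => hBmeas i
    rw [lintegral_congr hsplit]
    rw [lintegral_add_left hAmeas]
    rw [lintegral_const_mul 2 hSmeas]
    rw [lintegral_finset_sum _ fun i _ => hBmeas i]
    rw [hA, Finset.sum_congr rfl hB, Finset.sum_const, Nat.card_Icc, nsmul_eq_mul]
    norm_num
  -- Step 4: finiteness of constants
  have hs0 : MeasurableSet {ω | ξ 1 ω = 0} := (hξm 1) (measurableSet_singleton 0)
  have hs1 : MeasurableSet {ω | ξ 1 ω = 1} := (hξm 1) (measurableSet_singleton 1)
  have hsm : MeasurableSet {ω | ξ 1 ω = -1} := (hξm 1) (measurableSet_singleton (-1))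
  have hr_meas : r = μ {ω | ξ 1 ω = 0} := by
    rw [hr_def, ← lintegral_indicator_one hs0]
    apply lintegral_congr
    intro ω
    simp [Stmt14Aux.ind0, Set.indicator_apply]
  have hrtop : r ≠ ⊤ := by rw [hr_meas]; exact measure_ne_top μ _
  have hc2top : c2 ≠ ⊤ := by
    rw [hc2_def]
    have h := hT2.2
    rw [hasFiniteIntegral_iff_ofReal (Filter.Eventually.of_forall fun ω => sq_nonneg _)] at h
    refine ne_of_lt (lt_of_le_of_lt (le_of_eq (lintegral_congr fun ω => ?_)) h)
    simp only [Stmt14Aux.gT2]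
    rw [← ENNReal.ofReal_pow (hTpos 1 ω).le]
  have hc1top : c1 ≠ ⊤ := by
    rw [hc1_def]
    refine ne_of_lt (lt_of_le_of_lt (lintegral_mono fun ω => Stmt14Aux.gT_le_one_add_gT2 _) ?_)
    rw [lintegral_add_left measurable_const]
    simp only [lintegral_const, one_mul, measure_univ, mul_one]
    exact ENNReal.add_lt_top.2 ⟨ENNReal.one_lt_top, (hc2_def ▸ hc2top).lt_top⟩
  have haatop : aa ≠ ⊤ := by
    rw [haa_def]
    exact ne_of_lt (lt_of_le_of_lt
      (lintegral_mono fun ω => Stmt14Aux.gT0_le_gT _) (hc1_def ▸ hc1top).lt_top)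
  -- Step 5: the value of r
  obtain ⟨R, hR_def⟩ : ∃ R : ℝ, R = r.toReal := ⟨_, rfl⟩
  have hRval : R = 1 - (p + q) := by
    have hu : {ω | ξ 1 ω = 0} ∪ {ω | ξ 1 ω = 1} ∪ {ω | ξ 1 ω = -1} = Set.univ := by
      ext ω
      simp only [Set.mem_union, Set.mem_setOf_eq, Set.mem_univ, iff_true]
      rcases hξval 1 ω with h | h | h
      · right; exact h
      · left; left; exact h
      · left; right; exact h
    have hd1 : Disjoint {ω | ξ 1 ω = 0} {ω | ξ 1 ω = 1} := by
      rw [Set.disjoint_left]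
      intro ω h0 h1
      simp only [Set.mem_setOf_eq] at h0 h1
      rw [h0] at h1; norm_num at h1
    have hd2 : Disjoint ({ω | ξ 1 ω = 0} ∪ {ω | ξ 1 ω = 1}) {ω | ξ 1 ω = -1} := by
      rw [Set.disjoint_left]
      intro ω h0 h1
      simp only [Set.mem_union, Set.mem_setOf_eq] at h0 h1
      rcases h0 with h | h <;> rw [h] at h1 <;> norm_num at h1
    have hpart : μ {ω | ξ 1 ω = 0} + μ {ω | ξ 1 ω = 1} + μ {ω | ξ 1 ω = -1} = 1 := by
      rw [← measure_union hd1 hs1, ← measure_union hd2 hsm, hu, measure_univ]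
    have h5 := congrArg ENNReal.toReal hpart
    rw [ENNReal.toReal_add (ENNReal.add_ne_top.2 ⟨measure_ne_top μ _, measure_ne_top μ _⟩)
        (measure_ne_top μ _),
      ENNReal.toReal_add (measure_ne_top μ _) (measure_ne_top μ _), ENNReal.toReal_one] at h5
    rw [hR_def, hr_meas, hp, hq]
    linarith
  have hR0 : 0 ≤ R := hR_def ▸ ENNReal.toReal_nonneg
  have hR1 : R < 1 := by rw [hRval]; linarith
  have h1R : (1 : ℝ) - R = p + q := by rw [hRval]; ring
  -- Step 6: real series
  have hterm_fin : ∀ n : ℕ,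
      c2 * r ^ n + 2 * ((n : ENNReal) * (aa * (c1 * r ^ (n - 1)))) ≠ ⊤ := by
    intro n
    refine ENNReal.add_ne_top.2 ⟨ENNReal.mul_ne_top hc2top (ENNReal.pow_ne_top hrtop), ?_⟩
    exact ENNReal.mul_ne_top (by simp) (ENNReal.mul_ne_top (ENNReal.natCast_ne_top n)
      (ENNReal.mul_ne_top haatop (ENNReal.mul_ne_top hc1top (ENNReal.pow_ne_top hrtop))))
  have hterm : ∀ n : ℕ,
      (c2 * r ^ n + 2 * ((n : ENNReal) * (aa * (c1 * r ^ (n - 1))))).toReal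
        = c2.toReal * R ^ n + 2 * ((n : ℝ) * (aa.toReal * (c1.toReal * R ^ (n - 1)))) := by
    intro n
    rw [ENNReal.toReal_add (ENNReal.mul_ne_top hc2top (ENNReal.pow_ne_top hrtop))
      (ENNReal.mul_ne_top (by simp) (ENNReal.mul_ne_top (ENNReal.natCast_ne_top n)
        (ENNReal.mul_ne_top haatop (ENNReal.mul_ne_top hc1top (ENNReal.pow_ne_top hrtop)))))]
    simp [ENNReal.toReal_mul, ENNReal.toReal_pow, hR_def]
  have hnorm : ‖R‖ < 1 := by rw [Real.norm_eq_abs, abs_of_nonneg hR0]; exact hR1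
  have hgeo : Summable fun n : ℕ => R ^ n := summable_geometric_of_lt_one hR0 hR1
  have hsum_nr : Summable fun n : ℕ => (n : ℝ) * R ^ n := by
    have h := summable_pow_mul_geometric_of_norm_lt_one 1 hnorm
    simpa using h
  have hshift : (fun n : ℕ => ((n + 1 : ℕ) : ℝ) * R ^ ((n + 1) - 1))
      = fun n : ℕ => (n : ℝ) * R ^ n + R ^ n := by
    funext n
    push_cast [Nat.add_sub_cancel]
    ring
  have hsumW2 : Summable fun n : ℕ => (n : ℝ) * R ^ (n - 1) := by
    apply (summable_nat_add_iff 1).1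
    rw [show (fun n : ℕ => ((n + 1 : ℕ) : ℝ) * R ^ ((n + 1) - 1))
        = fun n : ℕ => (n : ℝ) * R ^ n + R ^ n from hshift]
    exact hsum_nr.add hgeo
  have htsumW2 : ∑' n : ℕ, (n : ℝ) * R ^ (n - 1) = ((1 - R)⁻¹) ^ 2 := by
    rw [Summable.tsum_eq_zero_add hsumW2]
    simp only [Nat.cast_zero, zero_mul, zero_add]
    rw [tsum_congr fun b => congrFun hshift b]
    rw [Summable.tsum_add hsum_nr hgeo, tsum_coe_mul_geometric_of_norm_lt_one hnorm,
      tsum_geometric_of_lt_one hR0 hR1]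
    have hne : (1 : ℝ) - R ≠ 0 := by rw [h1R]; exact ne_of_gt hpq
    field_simp
    ring
  -- Step 7: integrals as toReal
  have hC2 : ∫ ω, T 1 ω ^ 2 ∂μ = c2.toReal := by
    rw [integral_eq_lintegral_of_nonneg_ae (Filter.Eventually.of_forall fun ω => sq_nonneg _)
      ((hTm 1).pow_const 2).aestronglyMeasurable]
    rw [hc2_def]
    congr 1
    apply lintegral_congr
    intro ω
    simp only [Stmt14Aux.gT2]
    exact ENNReal.ofReal_pow (hTpos 1 ω).le 2
  have hC1 : ∫ ω, T 1 ω ∂μ = c1.toReal := by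
    rw [integral_eq_lintegral_of_nonneg_ae
      (Filter.Eventually.of_forall fun ω => (hTpos 1 ω).le) (hTm 1).aestronglyMeasurable]
    rw [hc1_def]
    rfl
  have hAA : ∫ ω in {ω | ξ 1 ω = 0}, T 1 ω ∂μ = aa.toReal := by
    rw [integral_eq_lintegral_of_nonneg_ae
      (Filter.Eventually.of_forall fun ω => (hTpos 1 ω).le)
      (hTm 1).aestronglyMeasurable.restrict]
    rw [haa_def]
    congr 1
    rw [← lintegral_indicator hs0]
    apply lintegral_congr
    intro ω
    simp [Stmt14Aux.gT0, Set.indicator_apply, Set.mem_setOf_eq]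
  -- Final assembly
  rw [hint, hlint, tsum_congr hWint, ENNReal.tsum_toReal_eq hterm_fin, tsum_congr hterm]
  have hsplit2 : Summable fun n : ℕ => c2.toReal * R ^ n := hgeo.mul_left _
  have hsplit3 : Summable fun n : ℕ =>
      2 * ((n : ℝ) * (aa.toReal * (c1.toReal * R ^ (n - 1)))) :=
    (hsumW2.mul_left (2 * aa.toReal * c1.toReal)).congr fun n => by ring
  rw [Summable.tsum_add hsplit2 hsplit3, tsum_mul_left, tsum_geometric_of_lt_one hR0 hR1]
  have h3 : ∑' n : ℕ, 2 * ((n : ℝ) * (aa.toReal * (c1.toReal * R ^ (n - 1))))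
      = 2 * aa.toReal * c1.toReal * ∑' n : ℕ, (n : ℝ) * R ^ (n - 1) := by
    rw [← tsum_mul_left]
    exact tsum_congr fun n => by ring
  rw [h3, htsumW2, hC2, hC1, hAA, h1R]
  have hne : p + q ≠ 0 := ne_of_gt hpq
  field_simp
end
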